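/- arXiv:1612.08318 — 7 statements merged into one kernel-verified Lean document; each statement's English description precedes it below -/
import Mathlib

section
/- Let s ≥ 1, let β_j = a_j + i·b_j (j = 1, …, s) be complex numbers with a_j, b_j ∈ ℝ, and let u₁, …, u_s be real numbers. Then the real binary quadratic S(x,z) = Σ_{j=1}^s 2u_j²(x − β_j z)(x − conj(β_j) z) has discriminant Δ(S) = −16 · ( Σ_{1 ≤ i < j ≤ s} u_i² u_j² [ (a_i − a_j)² + b_i² + b_j² ] + Σ_{j=1}^s u_j⁴ b_j² ). -/
/-!
Since `(x - β z)(x - conj β z) = x² - 2 (Re β) x z + |β|² z²`, the coefficients are, with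
`p_j = u_j²`, `A = 2 Σ p_j`, `B = -4 Σ p_j a_j` and `C = 2 Σ p_j (a_j² + b_j²)`. The discriminant
is then `16 ((Σ p_j a_j)² - Σ p_j · Σ p_j (a_j² + b_j²))`. Written as a double sum over `(i, j)`,
the diagonal contributes `-p_j² b_j²` and each pair `i < j` contributes
`-p_i p_j ((a_i - a_j)² + b_i² + b_j²)`, as in Lagrange's identity.
-/

open Complex Finset

theorem Finset.sum_sum_eq_sum_add_sum_Ioi {ι M : Type*} [Fintype ι] [LinearOrder ι]
    [LocallyFiniteOrderTop ι] [LocallyFiniteOrderBot ι] [AddCommMonoid M] (f : ι → ι → M) :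
    ∑ i, ∑ j, f i j = ∑ i, f i i + ∑ i, ∑ j ∈ Ioi i, (f i j + f j i) := by
  have row (i : ι) : ∑ j, f i j = f i i + ∑ j ∈ Ioi i, f i j + ∑ j ∈ Iio i, f i j := by
    rw [← sum_filter_add_sum_filter_not univ (i < ·), filter_lt_eq_Ioi]
    simp only [not_lt]
    rw [filter_ge_eq_Iic, ← Iio_insert, sum_insert notMem_Iio_self]
    abel
  have swap : ∑ i, ∑ j ∈ Iio i, f i j = ∑ j, ∑ i ∈ Ioi j, f i j :=
    sum_comm' fun _ _ => by simp [and_comm]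
  simp only [row, sum_add_distrib, swap]
  abel

theorem sq_sum_mul_sub_sum_mul_sum {ι R : Type*} [Fintype ι] [LinearOrder ι]
    [LocallyFiniteOrderTop ι] [LocallyFiniteOrderBot ι] [CommRing R] (p a b : ι → R) :
    (∑ j, p j * a j) ^ 2 - (∑ j, p j) * ∑ j, p j * (a j ^ 2 + b j ^ 2)
      = -(∑ i, ∑ j ∈ Ioi i, p i * p j * ((a i - a j) ^ 2 + (b i ^ 2 + b j ^ 2))
          + ∑ j, p j ^ 2 * b j ^ 2) := by
  have double : (∑ j, p j * a j) ^ 2 - (∑ j, p j) * ∑ j, p j * (a j ^ 2 + b j ^ 2)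
      = ∑ i, ∑ j, p i * p j * (a i * a j - a j ^ 2 - b j ^ 2) := by
    simp only [sq, sum_mul_sum, ← sum_sub_distrib]
    exact sum_congr rfl fun i _ => sum_congr rfl fun j _ => by ring
  rw [double, sum_sum_eq_sum_add_sum_Ioi, add_comm, neg_add, ← sum_neg_distrib, ← sum_neg_distrib]
  congr 1
  · exact sum_congr rfl fun i _ => by rw [← sum_neg_distrib]; exact sum_congr rfl fun j _ => by ring
  · exact sum_congr rfl fun i _ => by ring

theorem sub_mul_sub_conj_mul (β : ℂ) (x z : ℝ) :
    ((x : ℂ) - β * z) * ((x : ℂ) - starRingEnd ℂ β * z)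
      = ((x ^ 2 - 2 * β.re * x * z + normSq β * z ^ 2 : ℝ) : ℂ) := by
  calc ((x : ℂ) - β * z) * ((x : ℂ) - starRingEnd ℂ β * z)
      = x ^ 2 - (β + starRingEnd ℂ β) * x * z + β * starRingEnd ℂ β * z ^ 2 := by ring
    _ = _ := by rw [add_conj, mul_conj]; push_cast; ring

theorem eq_of_forall_quadratic_eq {R : Type*} [CommRing R] {A B C A' B' C' : R}
    (h : ∀ x z : R, A * x ^ 2 + B * x * z + C * z ^ 2 = A' * x ^ 2 + B' * x * z + C' * z ^ 2) :
    A = A' ∧ B = B' ∧ C = C' := by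
  have h10 := h 1 0
  have h01 := h 0 1
  have h11 := h 1 1
  simp only [one_pow, zero_pow two_ne_zero, mul_one, mul_zero, add_zero, zero_add] at h10 h01 h11
  refine ⟨h10, ?_, h01⟩
  linear_combination h11 - h10 - h01

theorem stmt1_general (s : ℕ) (a b u : Fin s → ℝ) (A B C : ℝ)
    (hS : ∀ x z : ℝ,
      ∑ j : Fin s, 2 * (u j : ℂ) ^ 2 * ((x : ℂ) - ((a j : ℂ) + (b j : ℂ) * Complex.I) * (z : ℂ))
          * ((x : ℂ) - (starRingEnd ℂ) ((a j : ℂ) + (b j : ℂ) * Complex.I) * (z : ℂ))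
        = (A : ℂ) * (x : ℂ) ^ 2 + (B : ℂ) * (x : ℂ) * (z : ℂ) + (C : ℂ) * (z : ℂ) ^ 2) :
    B ^ 2 - 4 * A * C =
      -16 * ((∑ i : Fin s, ∑ j ∈ Finset.Ioi i,
          u i ^ 2 * u j ^ 2 * ((a i - a j) ^ 2 + (b i ^ 2 + b j ^ 2)))
        + ∑ j : Fin s, u j ^ 4 * b j ^ 2) := by
  have hreal (x z : ℝ) : (2 * ∑ j, u j ^ 2) * x ^ 2 + (-4 * ∑ j, u j ^ 2 * a j) * x * z
      + (2 * ∑ j, u j ^ 2 * (a j ^ 2 + b j ^ 2)) * z ^ 2 = A * x ^ 2 + B * x * z + C * z ^ 2 := by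
    have h := hS x z
    simp only [mul_assoc _ (_ - _), sub_mul_sub_conj_mul, add_re, ofReal_re, mul_I_re, ofReal_im,
      normSq_add_mul_I, neg_zero, add_zero] at h
    have h' : ∑ j, 2 * u j ^ 2 * (x ^ 2 - 2 * a j * x * z + (a j ^ 2 + b j ^ 2) * z ^ 2)
        = A * x ^ 2 + B * x * z + C * z ^ 2 := by exact_mod_cast h
    rw [← h']
    simp only [mul_sum, sum_mul, ← sum_add_distrib]
    exact sum_congr rfl fun j _ => by ring
  obtain ⟨rfl, rfl, rfl⟩ := eq_of_forall_quadratic_eq hreal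
  have key := sq_sum_mul_sub_sum_mul_sum (fun j => u j ^ 2) a b
  simp only [← pow_mul] at key
  linear_combination 16 * key

/-- For `s ≥ 1`, complex numbers `β_j = a_j + i b_j` and real numbers
`u₁, …, u_s`, the real binary quadratic
`S(x,z) = Σ_j 2 u_j² (x - β_j z)(x - conj β_j z)`, written as `A x² + B x z + C z²`, has
discriminant `B² - 4AC = -16 ( Σ_{i<j} u_i² u_j² [(a_i - a_j)² + b_i² + b_j²] + Σ_j u_j⁴ b_j² )`. -/
theorem stmt1 (s : ℕ) (hs : 1 ≤ s) (a b u : Fin s → ℝ) (A B C : ℝ)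
    (hS : ∀ x z : ℝ,
      ∑ j : Fin s, 2 * (u j : ℂ) ^ 2 * ((x : ℂ) - ((a j : ℂ) + (b j : ℂ) * Complex.I) * (z : ℂ))
          * ((x : ℂ) - (starRingEnd ℂ) ((a j : ℂ) + (b j : ℂ) * Complex.I) * (z : ℂ))
        = (A : ℂ) * (x : ℂ) ^ 2 + (B : ℂ) * (x : ℂ) * (z : ℂ) + (C : ℂ) * (z : ℂ) ^ 2) :
    B ^ 2 - 4 * A * C =
      -16 * ((∑ i : Fin s, ∑ j ∈ Finset.Ioi i,
          u i ^ 2 * u j ^ 2 * ((a i - a j) ^ 2 + (b i ^ 2 + b j ^ 2)))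
        + ∑ j : Fin s, u j ^ 4 * b j ^ 2) :=
  stmt1_general s a b u A B C hS
end

section
/- Let n = r + 2s ≥ 2, let α₁, …, α_r be pairwise distinct real numbers, let β_j = a_j + i·b_j (j = 1, …, s) be complex numbers with b_j ≠ 0, and let t₁, …, t_r, u₁, …, u_s be nonzero real numbers. Then the real binary quadratic Q(x,z) = Σ_{i=1}^r t_i²(x − α_i z)² + Σ_{j=1}^s 2u_j²(x − β_j z)(x − conj(β_j) z) is positive definite: Q(x,z) > 0 for every (x,z) ∈ ℝ² with (x,z) ≠ (0,0). -/
open Complex ComplexConjugate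

/-! The conjugate pair `β, conj β` contributes `2u²|x - βz|²`, which is positive off the origin
because `Im (x - βz) = -(Im β) z`. If there is no such pair then `r ≥ 2`, and two distinct real
roots `α_i ≠ α_k` cannot both satisfy `x = α z` unless `x = z = 0`. -/

theorem sub_mul_mul_sub_conj_mul (x z : ℝ) (β : ℂ) :
    ((x : ℂ) - β * z) * ((x : ℂ) - conj β * z) = normSq ((x : ℂ) - β * z) := by
  rw [← mul_conj]
  simp only [map_sub, map_mul, conj_ofReal]

theorem normSq_sub_mul_pos {β : ℂ} (hβ : β.im ≠ 0) {x z : ℝ} (hxz : (x, z) ≠ (0, 0)) :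
    0 < normSq ((x : ℂ) - β * z) := by
  refine normSq_pos.2 fun h => hxz ?_
  have him : β.im * z = 0 := by simpa using congrArg im h
  have hz : z = 0 := (mul_eq_zero.1 him).resolve_left hβ
  have hx : x = 0 := by simpa [hz] using congrArg re h
  rw [hx, hz]

theorem exists_sub_mul_ne_zero {ι K : Type*} [Nontrivial ι] [Field K] {α : ι → K}
    (hα : Function.Injective α) {x z : K} (hxz : (x, z) ≠ (0, 0)) :
    ∃ i, x - α i * z ≠ 0 := by
  by_contra! h
  obtain ⟨i, k, hik⟩ := exists_pair_ne ι
  have hdiff : (α i - α k) * z = 0 := by linear_combination h k - h i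
  have hz : z = 0 := (mul_eq_zero.1 hdiff).resolve_left (sub_ne_zero.2 (hα.ne hik))
  have hx : x = 0 := by simpa [hz] using h i
  exact hxz (by rw [hx, hz])

/-- For `n = r + 2s ≥ 2`, pairwise distinct real `α_i`, complex
`β_j = a_j + i b_j` with `b_j ≠ 0`, and nonzero real `t_i`, `u_j`, the real binary quadratic
`Q(x,z) = Σ_i t_i²(x - α_i z)² + Σ_j 2u_j²(x - β_j z)(x - conj β_j z)` is positive definite. -/
theorem stmt3 (r s : ℕ) (hn : 2 ≤ r + 2 * s)
    (α t : Fin r → ℝ) (a b u : Fin s → ℝ)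
    (hα : Function.Injective α)
    (hb : ∀ j, b j ≠ 0) (ht : ∀ i, t i ≠ 0) (hu : ∀ j, u j ≠ 0)
    (Q : ℝ → ℝ → ℝ)
    (hQ : ∀ x z : ℝ, (Q x z : ℂ) =
      (∑ i : Fin r, (t i : ℂ) ^ 2 * ((x : ℂ) - (α i : ℂ) * (z : ℂ)) ^ 2)
        + ∑ j : Fin s, 2 * (u j : ℂ) ^ 2
            * ((x : ℂ) - ((a j : ℂ) + (b j : ℂ) * Complex.I) * (z : ℂ))
            * ((x : ℂ) - (starRingEnd ℂ) ((a j : ℂ) + (b j : ℂ) * Complex.I) * (z : ℂ))) :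
    ∀ x z : ℝ, (x, z) ≠ (0, 0) → 0 < Q x z := by
  intro x z hxz
  have hQ_real : Q x z = (∑ i, t i ^ 2 * (x - α i * z) ^ 2)
      + ∑ j, 2 * u j ^ 2 * normSq ((x : ℂ) - (a j + b j * I) * z) := by
    apply ofReal_injective
    rw [hQ x z]
    push_cast
    congr 1
    refine Finset.sum_congr rfl fun j _ => ?_
    rw [mul_assoc, sub_mul_mul_sub_conj_mul]
  have hreal_term_nonneg (i : Fin r) : 0 ≤ t i ^ 2 * (x - α i * z) ^ 2 := by positivity
  have hcplx_term_nonneg (j : Fin s) : 0 ≤ 2 * u j ^ 2 * normSq ((x : ℂ) - (a j + b j * I) * z) :=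
    mul_nonneg (by positivity) (normSq_nonneg _)
  rw [hQ_real]
  rcases Nat.eq_zero_or_pos s with hs | hs
  · have : Nontrivial (Fin r) := Fin.nontrivial_iff_two_le.2 (by omega)
    obtain ⟨i, hi⟩ := exists_sub_mul_ne_zero hα hxz
    have hti := ht i
    refine add_pos_of_pos_of_nonneg ?_ (Finset.sum_nonneg fun j _ => hcplx_term_nonneg j)
    exact Finset.sum_pos' (fun i _ => hreal_term_nonneg i) ⟨i, Finset.mem_univ _, by positivity⟩
  · let j : Fin s := ⟨0, hs⟩
    have hβ : (a j + b j * I).im ≠ 0 := by simpa using hb j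
    have hnormSq := normSq_sub_mul_pos hβ hxz
    have huj := hu j
    refine add_pos_of_nonneg_of_pos (Finset.sum_nonneg fun i _ => hreal_term_nonneg i) ?_
    exact Finset.sum_pos' (fun j _ => hcplx_term_nonneg j) ⟨j, Finset.mem_univ _, by positivity⟩
end

section
/- Let f(x,z) ∈ ℝ[x,z] be a binary form of degree n ≥ 3 with nonzero leading coefficient a₀ (the coefficient of xⁿ) and n distinct roots, having r distinct real roots α₁, …, α_r and s conjugate pairs of non-real roots β_j = a_j + i·b_j, conj(β_j) with b_j ≠ 0, where r + 2s = n. For (t,u) ∈ ℝ_{>0}^r × ℝ_{>0}^s let Q_{t,u}(x,z) = Σ_{i=1}^r t_i²(x − α_i z)² + Σ_{j=1}^s 2u_j²(x − β_j z)(x − conj(β_j) z), let 𝔇(t,u) be the discriminant of Q_{t,u}, and define θ₀(t,u) = a₀² · |𝔇(t,u)|^{n/2} / ( ∏_{i=1}^r t_i² · ∏_{j=1}^s u_j⁴ ). Then θ₀, restricted to the set { (t,u) ∈ ℝ_{>0}^r × ℝ_{>0}^s : ∏_{i=1}^r t_i² · ∏_{j=1}^s u_j⁴ = 1 }, attains a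 global minimum, and it does so at exactly one point of this set. -/
/-!
On the constraint set `θ₀ = a₀² (-𝔇)^{n/2}`, and a Lagrange-type identity writes `-𝔇` as
`2 ∑_{k,l} e_{kl} (y_k y_l)²` with `e_{kl} ≥ 0`, where `k` runs over the real roots and the
conjugate pairs and `y = (t, u)`; so one minimises this energy on the hypersurface
`∏ y_k^{m_k} = 1`. Distinct roots make `e_{kl} > 0` off the diagonal and at conjugate pairs.
A bounded energy bounds the products `y_k y_l` along these edges, which together with the
constraint and `n ≥ 3` bounds every `y_k`: a minimum exists. The coordinatewise geometric mean
`√(y z)` of two minimisers stays on the hypersurface and its energy falls short of the mean energy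
by `½ ∑ e_{kl} (y_k y_l - z_k z_l)²`; hence `y_k y_l = z_k z_l` along every edge, and a loop or a
triangle in this graph forces `y = z`.
-/

open Complex

/-- The quantity `θ₀(t,u) = a₀² |𝔇(t,u)|^{n/2} / (∏ t_i² ∏ u_j⁴)`, where `𝔇(t,u) = B² - 4AC`
is the discriminant of the positive definite quadratic
`Q_{t,u}(x,z) = Σ_i t_i²(x - α_i z)² + Σ_j 2u_j²(x - β_j z)(x - conj β_j z)
             = A x² + B x z + C z²` (with `β_j = a_j + i b_j`). -/
noncomputable def theta0 (n r s : ℕ) (a₀ : ℝ) (α : Fin r → ℝ) (a b : Fin s → ℝ)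
    (p : (Fin r → ℝ) × (Fin s → ℝ)) : ℝ :=
  let A : ℝ := (∑ i, p.1 i ^ 2) + ∑ j, 2 * p.2 j ^ 2
  let B : ℝ := (-2) * (∑ i, p.1 i ^ 2 * α i) - 4 * ∑ j, p.2 j ^ 2 * a j
  let C : ℝ := (∑ i, p.1 i ^ 2 * α i ^ 2) + ∑ j, 2 * p.2 j ^ 2 * (a j ^ 2 + b j ^ 2)
  a₀ ^ 2 * |B ^ 2 - 4 * A * C| ^ ((n : ℝ) / 2) / ((∏ i, p.1 i ^ 2) * ∏ j, p.2 j ^ 4)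

open Finset Filter

section PairEnergy

variable {K : Type*} [Fintype K]

def pairEnergy (e : K → K → ℝ) (y : K → ℝ) : ℝ :=
  ∑ k, ∑ l, e k l * (y k * y l) ^ 2

def unitMonomialSet (m : K → ℕ) : Set (K → ℝ) :=
  {y | (∀ k, 0 < y k) ∧ ∏ k, y k ^ m k = 1}

variable {e : K → K → ℝ} {m : K → ℕ}

lemma sum_sum_mul_mul_sq_sub_add (c μ δ : K → ℝ) :
    ∑ k, ∑ l, c k * c l * ((μ k - μ l) ^ 2 + δ k + δ l)
      = 2 * ((∑ k, c k) * (∑ k, c k * (μ k ^ 2 + δ k)) - (∑ k, c k * μ k) ^ 2) := by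
  set h : K → ℝ := fun k => c k * (μ k ^ 2 + δ k)
  calc ∑ k, ∑ l, c k * c l * ((μ k - μ l) ^ 2 + δ k + δ l)
      = ∑ k, ∑ l, (c k * h l + c l * h k - 2 * (c k * μ k * (c l * μ l))) :=
        sum_congr rfl fun k _ => sum_congr rfl fun l _ => by ring
    _ = ∑ k, ∑ l, c k * h l + ∑ k, ∑ l, c l * h k - 2 * ∑ k, ∑ l, c k * μ k * (c l * μ l) := by
        simp only [sum_add_distrib, sum_sub_distrib, mul_sum]
    _ = 2 * ((∑ k, c k) * (∑ k, h k) - (∑ k, c k * μ k) ^ 2) := by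
        rw [sum_comm (f := fun k l => c l * h k), sq, sum_mul_sum, sum_mul_sum]
        ring

lemma continuous_pairEnergy (e : K → K → ℝ) : Continuous (pairEnergy e) := by
  unfold pairEnergy
  fun_prop

lemma pairEnergy_nonneg (he : ∀ k l, 0 ≤ e k l) (y : K → ℝ) : 0 ≤ pairEnergy e y :=
  sum_nonneg fun k _ => sum_nonneg fun l _ => mul_nonneg (he k l) (sq_nonneg _)

lemma single_le_pairEnergy (he : ∀ k l, 0 ≤ e k l) (y : K → ℝ) (k l : K) :
    e k l * (y k * y l) ^ 2 ≤ pairEnergy e y := by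
  have hterm : ∀ k l, 0 ≤ e k l * (y k * y l) ^ 2 := fun k l => by
    have := he k l
    positivity
  calc e k l * (y k * y l) ^ 2 ≤ ∑ l', e k l' * (y k * y l') ^ 2 :=
        single_le_sum (fun l' _ => hterm k l') (mem_univ l)
    _ ≤ pairEnergy e y :=
        single_le_sum (f := fun k => ∑ l', e k l' * (y k * y l') ^ 2)
          (fun k' _ => sum_nonneg fun l' _ => hterm k' l') (mem_univ k)

lemma mul_le_of_pairEnergy_le (he : ∀ k l, 0 ≤ e k l) {y : K → ℝ} {M : ℝ}
    (hyM : pairEnergy e y ≤ M) {k l : K} (hkl : 0 < e k l) : y k * y l ≤ 1 + M / e k l := by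
  have hsq : (y k * y l) ^ 2 ≤ M / e k l := by
    rw [le_div_iff₀ hkl]
    linarith [single_le_pairEnergy he y k l]
  nlinarith [sq_nonneg (y k * y l - 1)]

lemma pairEnergy_add_sub_two_mul (e : K → K → ℝ) {y z g : K → ℝ}
    (hg : ∀ k, g k ^ 2 = y k * z k) :
    pairEnergy e y + pairEnergy e z - 2 * pairEnergy e g
      = ∑ k, ∑ l, e k l * (y k * y l - z k * z l) ^ 2 := by
  simp only [pairEnergy, mul_sum, ← sum_add_distrib, ← sum_sub_distrib]
  refine sum_congr rfl fun k _ => sum_congr rfl fun l _ => ?_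
  rw [mul_pow (g k), hg, hg]
  ring

lemma one_mem_unitMonomialSet : (1 : K → ℝ) ∈ unitMonomialSet m :=
  ⟨fun _ => one_pos, by simp⟩

lemma isClosed_unitMonomialSet (hm : ∀ k, m k ≠ 0) : IsClosed (unitMonomialSet m) := by
  have hS : unitMonomialSet m = {y | (∀ k, 0 ≤ y k) ∧ ∏ k, y k ^ m k = 1} := by
    ext y
    refine ⟨fun h => ⟨fun k => (h.1 k).le, h.2⟩, fun ⟨hy, hprod⟩ => ⟨fun k => ?_, hprod⟩⟩
    refine (hy k).lt_of_ne fun hk => (one_ne_zero : (1 : ℝ) ≠ 0) ?_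
    rw [← hprod]
    exact prod_eq_zero (mem_univ k) (by rw [← hk, zero_pow (hm k)])
  rw [hS, Set.ofPred_and, Set.ofPred_forall]
  exact (isClosed_iInter fun k => isClosed_le continuous_const (continuous_apply k)).inter
    (isClosed_eq (by fun_prop) continuous_const)

lemma sqrt_mul_mem_unitMonomialSet {y z : K → ℝ} (hy : y ∈ unitMonomialSet m)
    (hz : z ∈ unitMonomialSet m) : (fun k => √(y k * z k)) ∈ unitMonomialSet m := by
  refine ⟨fun k => Real.sqrt_pos.2 (mul_pos (hy.1 k) (hz.1 k)), ?_⟩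
  have hprod : ∏ k, (y k * z k) ^ m k = 1 := by
    rw [prod_congr rfl fun k _ => mul_pow (y k) (z k) (m k), prod_mul_distrib, hy.2, hz.2,
      mul_one]
  have hsq : (∏ k, √(y k * z k) ^ m k) ^ 2 = 1 := by
    rw [← hprod, ← prod_pow]
    refine prod_congr rfl fun k _ => ?_
    rw [← pow_mul, mul_comm (m k), pow_mul, Real.sq_sqrt (mul_pos (hy.1 k) (hz.1 k)).le]
  exact (pow_eq_one_iff_of_nonneg (by positivity) two_ne_zero).1 hsq

lemma pow_sub_le_pow_mul_pow {y : K → ℝ} (hy : ∀ l, 0 ≤ y l) (hprod : ∏ l, y l ^ m l = 1)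
    {X : ℝ} (k : K) (hX : ∀ l, l ≠ k → y k * y l ≤ X) :
    y k ^ (∑ l, m l - m k) ≤ y k ^ m k * X ^ (∑ l, m l - m k) := by
  classical
  have hN : ∑ l, m l - m k = ∑ l ∈ univ.erase k, m l := by
    rw [← add_sum_erase univ m (mem_univ k), Nat.add_sub_cancel_left]
  rw [hN]
  calc y k ^ (∑ l ∈ univ.erase k, m l)
      = y k ^ (∑ l ∈ univ.erase k, m l) * ∏ l, y l ^ m l := by rw [hprod, mul_one]
    _ = y k ^ m k * ∏ l ∈ univ.erase k, (y k * y l) ^ m l := by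
        rw [← mul_prod_erase univ _ (mem_univ k), prod_congr rfl fun l _ => mul_pow (y k) (y l) _,
          prod_mul_distrib, prod_pow_eq_pow_sum]
        ring
    _ ≤ y k ^ m k * ∏ l ∈ univ.erase k, X ^ m l := by
        refine mul_le_mul_of_nonneg_left (prod_le_prod (fun l _ => ?_) fun l hl => ?_) ?_
        · exact pow_nonneg (mul_nonneg (hy k) (hy l)) _
        · exact pow_le_pow_left₀ (mul_nonneg (hy k) (hy l)) (hX l (ne_of_mem_erase hl)) _
        · exact pow_nonneg (hy k) _
    _ = y k ^ m k * X ^ (∑ l ∈ univ.erase k, m l) := by rw [prod_pow_eq_pow_sum]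

lemma exists_bound_of_pairEnergy_le (he : ∀ k l, 0 ≤ e k l)
    (hoff : Pairwise fun k l => 0 < e k l) (hdiag : ∀ k, 0 < e k k ∨ 2 * m k < ∑ l, m l)
    (M : ℝ) (k : K) : ∃ B, ∀ y ∈ unitMonomialSet m, pairEnergy e y ≤ M → y k ≤ B := by
  rcases hdiag k with hkk | hk
  · refine ⟨2 + M / e k k, fun y _ hyM => ?_⟩
    nlinarith [mul_le_of_pairEnergy_le he hyM hkk, sq_nonneg (y k - 1)]
  set X := 1 + ∑ l, |M / e k l|
  refine ⟨max 1 (X ^ (∑ l, m l - m k)), fun y hy hyM => ?_⟩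
  rcases le_or_gt (y k) 1 with hk1 | hk1
  · exact le_max_of_le_left hk1
  refine le_max_of_le_right ?_
  have hpair : ∀ l, l ≠ k → y k * y l ≤ X := fun l hl =>
    (mul_le_of_pairEnergy_le he hyM (hoff hl.symm)).trans <| (add_le_add_iff_left 1).2 <|
      (le_abs_self _).trans (single_le_sum (fun l _ => abs_nonneg (M / e k l)) (mem_univ l))
  have hbound := pow_sub_le_pow_mul_pow (fun l => (hy.1 l).le) hy.2 k hpair
  rw [show ∑ l, m l - m k = m k + (∑ l, m l - 2 * m k) by omega, pow_add,
    mul_le_mul_iff_right₀ (pow_pos (hy.1 k) _)] at hbound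
  calc y k ≤ y k ^ (∑ l, m l - 2 * m k) := le_self_pow₀ hk1.le (by omega)
    _ ≤ X ^ (∑ l, m l - m k) := hbound.trans (le_of_eq (by congr 1; omega))

theorem exists_isMinOn_pairEnergy (he : ∀ k l, 0 ≤ e k l)
    (hoff : Pairwise fun k l => 0 < e k l) (hdiag : ∀ k, 0 < e k k ∨ 2 * m k < ∑ l, m l)
    (hm : ∀ k, m k ≠ 0) :
    ∃ y ∈ unitMonomialSet m, IsMinOn (pairEnergy e) (unitMonomialSet m) y := by
  refine (continuous_pairEnergy e).continuousOn.exists_isMinOn' (isClosed_unitMonomialSet hm)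
    one_mem_unitMonomialSet ?_
  choose B hB using exists_bound_of_pairEnergy_le he hoff hdiag (pairEnergy e 1)
  rw [Filter.Eventually, mem_inf_principal, mem_cocompact]
  refine ⟨Set.univ.pi fun k => Set.Icc 0 (B k), isCompact_univ_pi fun _ => isCompact_Icc,
    fun y hyB hy => ?_⟩
  show pairEnergy e 1 ≤ pairEnergy e y
  by_contra! hlt
  exact hyB fun k _ => ⟨(hy.1 k).le, hB k y hy hlt.le⟩

lemma two_lt_card_of_forall_two_mul_lt (hm : ∀ k, 2 * m k < ∑ l, m l) (k : K) :
    2 < Fintype.card K := by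
  have hlt : ∑ l, 2 * m l < ∑ _l : K, ∑ l, m l :=
    sum_lt_sum_of_nonempty ⟨k, mem_univ k⟩ fun l _ => hm l
  rw [← mul_sum, sum_const, card_univ, smul_eq_mul] at hlt
  exact Nat.lt_of_mul_lt_mul_right hlt

/-- A loop `0 < e a a` or, if there is none, a triangle (the weight condition then forces three
indices) pins down one coordinate; the edges to it pin down the others. -/
lemma eq_of_forall_mul_eq (hoff : Pairwise fun k l => 0 < e k l)
    (hdiag : ∀ k, 0 < e k k ∨ 2 * m k < ∑ l, m l) {y z : K → ℝ} (hy : ∀ k, 0 < y k)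
    (hz : ∀ k, 0 < z k) (h : ∀ k l, 0 < e k l → y k * y l = z k * z l) : y = z := by
  funext k
  obtain ⟨a, ha⟩ : ∃ a, y a = z a := by
    by_cases hloop : ∃ a, 0 < e a a
    · obtain ⟨a, ha⟩ := hloop
      exact ⟨a, (mul_self_inj (hy a).le (hz a).le).1 (h a a ha)⟩
    push Not at hloop
    have hcard := two_lt_card_of_forall_two_mul_lt
      (fun k => (hdiag k).resolve_left (hloop k).not_gt) k
    obtain ⟨a, b, c, hab, hac, hbc⟩ := Fintype.two_lt_card_iff.1 hcard
    refine ⟨a, (mul_self_inj (hy a).le (hz a).le).1 ?_⟩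
    refine mul_right_cancel₀ (mul_pos (hy b) (hy c)).ne' ?_
    calc y a * y a * (y b * y c) = (y a * y b) * (y a * y c) := by ring
      _ = (z a * z b) * (z a * z c) := by rw [h a b (hoff hab), h a c (hoff hac)]
      _ = z a * z a * (y b * y c) := by rw [h b c (hoff hbc)]; ring
  rcases eq_or_ne k a with rfl | hka
  · exact ha
  · refine mul_right_cancel₀ (hy a).ne' ?_
    rw [h k a (hoff hka), ha]

theorem eq_of_isMinOn_pairEnergy (he : ∀ k l, 0 ≤ e k l)
    (hoff : Pairwise fun k l => 0 < e k l) (hdiag : ∀ k, 0 < e k k ∨ 2 * m k < ∑ l, m l)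
    {y z : K → ℝ} (hy : y ∈ unitMonomialSet m) (hz : z ∈ unitMonomialSet m)
    (hymin : IsMinOn (pairEnergy e) (unitMonomialSet m) y)
    (hzmin : IsMinOn (pairEnergy e) (unitMonomialSet m) z) : y = z := by
  have hterm : ∀ k l, 0 ≤ e k l * (y k * y l - z k * z l) ^ 2 := fun k l => by
    have := he k l
    positivity
  have hdefect : ∑ k, ∑ l, e k l * (y k * y l - z k * z l) ^ 2 = 0 := by
    have hg : ∀ k, √(y k * z k) ^ 2 = y k * z k := fun k =>
      Real.sq_sqrt (mul_pos (hy.1 k) (hz.1 k)).le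
    refine le_antisymm ?_ (sum_nonneg fun k _ => sum_nonneg fun l _ => hterm k l)
    rw [← pairEnergy_add_sub_two_mul e hg]
    linarith [isMinOn_iff.1 hymin _ (sqrt_mul_mem_unitMonomialSet hy hz),
      isMinOn_iff.1 hymin z hz, isMinOn_iff.1 hzmin y hy]
  refine eq_of_forall_mul_eq hoff hdiag hy.1 hz.1 fun k l hkl => ?_
  rw [sum_eq_zero_iff_of_nonneg fun k _ => sum_nonneg fun l _ => hterm k l] at hdefect
  have hkl0 := (sum_eq_zero_iff_of_nonneg fun l _ => hterm k l).1 (hdefect k (mem_univ k)) l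
    (mem_univ l)
  rw [mul_eq_zero, or_iff_right hkl.ne', sq_eq_zero_iff, sub_eq_zero] at hkl0
  exact hkl0

theorem existsUnique_isMinOn_pairEnergy (he : ∀ k l, 0 ≤ e k l)
    (hoff : Pairwise fun k l => 0 < e k l) (hdiag : ∀ k, 0 < e k k ∨ 2 * m k < ∑ l, m l)
    (hm : ∀ k, m k ≠ 0) :
    ∃! y, y ∈ unitMonomialSet m ∧ IsMinOn (pairEnergy e) (unitMonomialSet m) y :=
  let ⟨y, hy, hymin⟩ := exists_isMinOn_pairEnergy he hoff hdiag hm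
  ⟨y, ⟨hy, hymin⟩, fun _ ⟨hz, hzmin⟩ => eq_of_isMinOn_pairEnergy he hoff hdiag hz hy hzmin hymin⟩

end PairEnergy

section BinaryForm

variable {r s : ℕ}

/-- Index `inl i` stands for the real root `α i` and index `inr j` for the pair `a j ± i b j`. -/
def rootMultiplicity : Fin r ⊕ Fin s → ℝ :=
  Sum.elim (fun _ => 1) (fun _ => 2)

def rootExponent (r s : ℕ) : Fin r ⊕ Fin s → ℕ :=
  Sum.elim (fun _ => 2) (fun _ => 4)

lemma sum_rootExponent : ∑ k, rootExponent r s k = 2 * (r + 2 * s) := by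
  simp only [rootExponent, Fintype.sum_sum_type, Sum.elim_inl, Sum.elim_inr, sum_const,
    card_univ, Fintype.card_fin, smul_eq_mul]
  ring

def rootSqIm (b : Fin s → ℝ) : Fin r ⊕ Fin s → ℝ :=
  Sum.elim (fun _ => 0) (fun j => b j ^ 2)

/-- `(Re β - Re β')² + (Im β)² + (Im β')²` is the mean of `|β - β'|²` and `|β - conj β'|²` for
roots `β`, `β'` of the classes `k`, `l`. -/
def rootPairWeight (α : Fin r → ℝ) (a b : Fin s → ℝ) (k l : Fin r ⊕ Fin s) : ℝ :=
  rootMultiplicity k * rootMultiplicity l *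
    ((Sum.elim α a k - Sum.elim α a l) ^ 2 + rootSqIm b k + rootSqIm b l)

variable {α : Fin r → ℝ} {a b : Fin s → ℝ}

lemma rootPairWeight_nonneg (k l : Fin r ⊕ Fin s) : 0 ≤ rootPairWeight α a b k l := by
  rcases k with i | j <;> rcases l with i' | j' <;>
    simp only [rootPairWeight, rootMultiplicity, rootSqIm, Sum.elim_inl, Sum.elim_inr] <;>
    positivity

lemma rootPairWeight_inr_pos (hb : ∀ j, b j ≠ 0) (k : Fin r ⊕ Fin s) (j : Fin s) :
    0 < rootPairWeight α a b k (.inr j) := by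
  have := hb j
  rcases k with i | j' <;>
    simp only [rootPairWeight, rootMultiplicity, rootSqIm, Sum.elim_inl, Sum.elim_inr] <;>
    positivity

lemma rootPairWeight_pos_of_ne (hα : Function.Injective α) (hb : ∀ j, b j ≠ 0)
    {k l : Fin r ⊕ Fin s} (hkl : k ≠ l) : 0 < rootPairWeight α a b k l := by
  rcases l with i' | j
  · rcases k with i | j
    · have : α i - α i' ≠ 0 := sub_ne_zero.2 (hα.ne fun h => hkl (congrArg _ h))
      simp only [rootPairWeight, rootMultiplicity, rootSqIm, Sum.elim_inl]
      positivity
    · have := hb j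
      simp only [rootPairWeight, rootMultiplicity, rootSqIm, Sum.elim_inl, Sum.elim_inr]
      positivity
  · exact rootPairWeight_inr_pos hb k j

lemma discriminant_eq_neg_two_mul_pairEnergy (α : Fin r → ℝ) (a b : Fin s → ℝ)
    (p : (Fin r → ℝ) × (Fin s → ℝ)) :
    ((-2) * (∑ i, p.1 i ^ 2 * α i) - 4 * ∑ j, p.2 j ^ 2 * a j) ^ 2
      - 4 * ((∑ i, p.1 i ^ 2) + ∑ j, 2 * p.2 j ^ 2)
        * ((∑ i, p.1 i ^ 2 * α i ^ 2) + ∑ j, 2 * p.2 j ^ 2 * (a j ^ 2 + b j ^ 2))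
      = -2 * pairEnergy (rootPairWeight α a b) (Sum.elim p.1 p.2) := by
  set c : Fin r ⊕ Fin s → ℝ := fun k => rootMultiplicity k * Sum.elim p.1 p.2 k ^ 2
  have hE : pairEnergy (rootPairWeight α a b) (Sum.elim p.1 p.2) = ∑ k, ∑ l, c k * c l *
      ((Sum.elim α a k - Sum.elim α a l) ^ 2 + rootSqIm b k + rootSqIm b l) :=
    sum_congr rfl fun k _ => sum_congr rfl fun l _ => by simp only [rootPairWeight, c]; ring
  rw [hE, sum_sum_mul_mul_sq_sub_add]
  simp only [c, Fintype.sum_sum_type, rootMultiplicity, rootSqIm, Sum.elim_inl, Sum.elim_inr]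
  ring_nf
  simp only [sum_add_distrib, ← sum_mul]
  ring

lemma theta0_eq (n : ℕ) (a₀ : ℝ) (α : Fin r → ℝ) (a b : Fin s → ℝ)
    {p : (Fin r → ℝ) × (Fin s → ℝ)} (hp : (∏ i, p.1 i ^ 2) * ∏ j, p.2 j ^ 4 = 1) :
    theta0 n r s a₀ α a b p =
      a₀ ^ 2 * (2 * pairEnergy (rootPairWeight α a b) (Sum.elim p.1 p.2)) ^ ((n : ℝ) / 2) := by
  have hE := pairEnergy_nonneg (rootPairWeight_nonneg (α := α) (a := a) (b := b))
    (Sum.elim p.1 p.2)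
  rw [theta0, hp, div_one, discriminant_eq_neg_two_mul_pairEnergy, abs_of_nonpos (by linarith),
    neg_mul, neg_neg]

lemma sumElim_mem_unitMonomialSet_iff (p : (Fin r → ℝ) × (Fin s → ℝ)) :
    Sum.elim p.1 p.2 ∈ unitMonomialSet (rootExponent r s) ↔
      (∀ i, 0 < p.1 i) ∧ (∀ j, 0 < p.2 j) ∧ (∏ i, p.1 i ^ 2) * ∏ j, p.2 j ^ 4 = 1 := by
  simp only [unitMonomialSet, rootExponent, Set.mem_ofPred_eq, Sum.forall, Sum.elim_inl,
    Sum.elim_inr, Fintype.prod_sum_type, and_assoc]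

lemma theta0_le_theta0_iff {n : ℕ} (hn : 0 < n) {a₀ : ℝ} (ha₀ : a₀ ≠ 0) (α : Fin r → ℝ)
    (a b : Fin s → ℝ) {p q : (Fin r → ℝ) × (Fin s → ℝ)}
    (hp : (∏ i, p.1 i ^ 2) * ∏ j, p.2 j ^ 4 = 1) (hq : (∏ i, q.1 i ^ 2) * ∏ j, q.2 j ^ 4 = 1) :
    theta0 n r s a₀ α a b p ≤ theta0 n r s a₀ α a b q ↔
      pairEnergy (rootPairWeight α a b) (Sum.elim p.1 p.2) ≤
        pairEnergy (rootPairWeight α a b) (Sum.elim q.1 q.2) := by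
  have hE := pairEnergy_nonneg (rootPairWeight_nonneg (α := α) (a := a) (b := b))
  rw [theta0_eq n a₀ α a b hp, theta0_eq n a₀ α a b hq, mul_le_mul_iff_right₀ (by positivity),
    Real.rpow_le_rpow_iff (by linarith [hE (Sum.elim p.1 p.2)])
      (by linarith [hE (Sum.elim q.1 q.2)]) (by positivity), mul_le_mul_iff_right₀ two_pos]

lemma sumElim_isMinOn_pairEnergy_iff {n : ℕ} (hn : 0 < n) {a₀ : ℝ} (ha₀ : a₀ ≠ 0)
    (α : Fin r → ℝ) (a b : Fin s → ℝ) (p : (Fin r → ℝ) × (Fin s → ℝ)) :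
    (Sum.elim p.1 p.2 ∈ unitMonomialSet (rootExponent r s) ∧
      IsMinOn (pairEnergy (rootPairWeight α a b))
        (unitMonomialSet (rootExponent r s)) (Sum.elim p.1 p.2)) ↔
      ((∀ i, 0 < p.1 i) ∧ (∀ j, 0 < p.2 j) ∧ (∏ i, p.1 i ^ 2) * ∏ j, p.2 j ^ 4 = 1) ∧
        ∀ q : (Fin r → ℝ) × (Fin s → ℝ),
          ((∀ i, 0 < q.1 i) ∧ (∀ j, 0 < q.2 j) ∧ (∏ i, q.1 i ^ 2) * ∏ j, q.2 j ^ 4 = 1) →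
          theta0 n r s a₀ α a b p ≤ theta0 n r s a₀ α a b q := by
  rw [sumElim_mem_unitMonomialSet_iff]
  refine and_congr_right fun hp => ?_
  rw [isMinOn_iff, ← (Equiv.sumArrowEquivProdArrow _ _ ℝ).symm.forall_congr_right]
  exact forall_congr' fun q => imp_congr_ctx (sumElim_mem_unitMonomialSet_iff q) fun hq =>
    (theta0_le_theta0_iff hn ha₀ α a b hp.2.2 hq.2.2).symm

end BinaryForm

/-- For a real binary form of degree `n = r + 2s ≥ 3` with nonzero leading
coefficient `a₀` and `n` distinct roots (real roots `α_i`, non-real roots `a_j ± i b_j`),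
the function `θ₀` restricted to `{(t,u) ∈ ℝ_{>0}^r × ℝ_{>0}^s : ∏ t_i² ∏ u_j⁴ = 1}`
attains a global minimum at exactly one point of this set. -/
theorem stmt4 (n r s : ℕ) (hn : 3 ≤ n) (hrs : r + 2 * s = n)
    (a₀ : ℝ) (ha₀ : a₀ ≠ 0)
    (α : Fin r → ℝ) (a b : Fin s → ℝ)
    (hb : ∀ j, b j ≠ 0)
    (hdistinct : Function.Injective
      (Sum.elim (fun i : Fin r => (α i : ℂ))
        (Sum.elim (fun j : Fin s => (a j : ℂ) + (b j : ℂ) * Complex.I)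
          (fun j : Fin s => (a j : ℂ) - (b j : ℂ) * Complex.I)))) :
    ∃! p : (Fin r → ℝ) × (Fin s → ℝ),
      ((∀ i, 0 < p.1 i) ∧ (∀ j, 0 < p.2 j) ∧
        (∏ i, p.1 i ^ 2) * ∏ j, p.2 j ^ 4 = 1) ∧
      ∀ q : (Fin r → ℝ) × (Fin s → ℝ),
        ((∀ i, 0 < q.1 i) ∧ (∀ j, 0 < q.2 j) ∧
          (∏ i, q.1 i ^ 2) * ∏ j, q.2 j ^ 4 = 1) →
        theta0 n r s a₀ α a b p ≤ theta0 n r s a₀ α a b q := by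
  have hα : Function.Injective α := fun i i' h => Sum.inl_injective (hdistinct (by simp [h]))
  have hdiag (k : Fin r ⊕ Fin s) :
      0 < rootPairWeight α a b k k ∨ 2 * rootExponent r s k < ∑ l, rootExponent r s l := by
    rcases k with i | j
    · right
      rw [sum_rootExponent, hrs]
      simp only [rootExponent, Sum.elim_inl]
      omega
    · exact .inl (rootPairWeight_inr_pos hb _ j)
  have hmin := existsUnique_isMinOn_pairEnergy rootPairWeight_nonneg
    (fun _ _ hkl => rootPairWeight_pos_of_ne hα hb hkl) hdiag (by simp [rootExponent, Sum.forall])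
  rw [(Equiv.sumArrowEquivProdArrow _ _ ℝ).existsUnique_congr_left] at hmin
  exact (existsUnique_congr (sumElim_isMinOn_pairEnergy_iff (by omega) ha₀ α a b)).1 hmin
end

section
/- Fix an integer n ≥ 3, let R = ℚ[a₀, …, aₙ] be the polynomial ring in n+1 indeterminates, and let f = Σ_{i=0}^n a_i x^{n−i} z^i ∈ R[x,z] be the generic binary form of degree n. Let f_x and f_z denote the partial derivatives of f with respect to x and z, and define F_f(x,z) := x · f_x(−f_z(x,z), f_x(x,z)) + z · f_z(−f_z(x,z), f_x(x,z)), where f_x(−f_z(x,z), f_x(x,z)) means the result of substituting the pair (−f_z(x,z), f_x(x,z)) for the variables of the two-variable polynomial f_x, and similarly for f_z. Then f divides F_f in R[x,z], and the quotient G_f := F_f/(n·f) is homogeneous of degree (n−1)(n−2) in (x,z); moreover, each coefficient of G_f (as a polynomial in x, z) is a homogeneous polynomial of degree n−1 in the indeterminates a₀, …, aₙ. -/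
/-!
Write `w = (-f_z, f_x)`. By Euler's identity `x f_x + z f_z = n f`, the pairs `z • w` and
`f_x • (x, z)` agree modulo `n f`, and since `f_x`, `f_z` are homogeneous of degree `n - 1`,
`z^(n-1) F_f ≡ f_x^(n-1) (x f_x + z f_z) = f_x^(n-1) n f ≡ 0` modulo `n f`. The variable `z` is
prime and does not divide `n f` (set `z = 0`: what remains is `n a₀ x^n`), so `n f ∣ F_f`.

Homogeneity of `G_f` in `(x, z)` follows by cancelling `n f` in a graded domain. For the
coefficients, substituting `t a_i` for `a_i` multiplies `f` by `t`, hence `F_f` by `t^n`, and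
cancelling `n f` again shows that it multiplies `G_f` by `t^(n-1)`.
-/

open MvPolynomial

/-- The associated form `F_f(x,z) = x·f_x(-f_z, f_x) + z·f_z(-f_z, f_x)` of a binary form
`f(x,z)` (variable `0` is `x`, variable `1` is `z`). -/
noncomputable def Fcov {R : Type*} [CommRing R] (f : MvPolynomial (Fin 2) R) :
    MvPolynomial (Fin 2) R :=
  X 0 * bind₁ ![-(pderiv 1 f), pderiv 0 f] (pderiv 0 f)
    + X 1 * bind₁ ![-(pderiv 1 f), pderiv 0 f] (pderiv 1 f)

theorem SetLike.mem_of_mul_mem_add {ι A σ : Type*} [DecidableEq ι] [AddCancelCommMonoid ι]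
    [Semiring A] [NoZeroDivisors A] [SetLike σ A] [AddSubmonoidClass σ A] (𝒜 : ι → σ)
    [GradedRing 𝒜] {a b : A} {i j : ι} (ha : a ∈ 𝒜 i) (ha₀ : a ≠ 0) (hab : a * b ∈ 𝒜 (i + j)) :
    b ∈ 𝒜 j := by
  classical
  have hcomp : ∀ k ≠ j, (DirectSum.decompose 𝒜 b k : A) = 0 := fun k hk => by
    have h := DirectSum.coe_decompose_mul_add_of_left_mem 𝒜 (j := k) (b := b) ha
    rw [DirectSum.decompose_of_mem_ne 𝒜 hab (by simpa using hk.symm)] at h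
    exact (mul_eq_zero.mp h.symm).resolve_left ha₀
  rw [← DirectSum.sum_support_decompose 𝒜 b]
  refine sum_mem fun k _ => ?_
  obtain rfl | hk := eq_or_ne k j
  · exact SetLike.coe_mem _
  · rw [hcomp k hk]
    exact zero_mem _

namespace MvPolynomial

theorem aeval_mul_left_of_isHomogeneous {R S σ : Type*} [CommSemiring R] [CommSemiring S]
    [Algebra R S] {p : MvPolynomial σ R} {m : ℕ} (hp : p.IsHomogeneous m) (c : S)
    (g : σ → S) : aeval (fun i => c * g i) p = c ^ m * aeval g p := by
  induction hp using IsWeightedHomogeneous.induction_on with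
  | zero => simp
  | add p q _ _ hp hq => rw [map_add, map_add, hp, hq, mul_add]
  | monomial d r hd =>
    simp only [aeval_monomial, mul_pow, Finsupp.prod_mul, ← hd]
    rw [Finsupp.prod, Finset.prod_pow_eq_pow_sum, ← Finsupp.degree_apply,
      Finsupp.degree_eq_weight_one, ← Pi.one_def]
    ring

theorem IsHomogeneous.of_mul_left {R σ : Type*} [CommSemiring R] [NoZeroDivisors R]
    {p q : MvPolynomial σ R} {m k : ℕ} (hp : p.IsHomogeneous m) (hp₀ : p ≠ 0)
    (hpq : (p * q).IsHomogeneous (m + k)) : q.IsHomogeneous k :=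
  letI := gradedAlgebra (σ := σ) (R := R)
  SetLike.mem_of_mul_mem_add (homogeneousSubmodule σ R) hp hp₀ hpq

theorem dvd_aeval_sub_aeval {R S σ : Type*} [CommSemiring R] [CommRing S] [Algebra R S]
    {t : S} {g g' : σ → S} (h : ∀ i, t ∣ g i - g' i) (p : MvPolynomial σ R) :
    t ∣ aeval g p - aeval g' p := by
  induction p using MvPolynomial.induction_on with
  | C r => simp
  | add p q hp hq =>
    rw [map_add, map_add, add_sub_add_comm]
    exact dvd_add hp hq
  | mul_X p i hp =>
    simp only [map_mul, aeval_X]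
    rw [show aeval g p * g i - aeval g' p * g' i
        = (aeval g p - aeval g' p) * g i + aeval g' p * (g i - g' i) by ring]
    exact dvd_add (hp.mul_right _) ((h i).mul_left _)

/-- `q ↦ q(t • a)`, with `t` the variable of the polynomial ring. -/
noncomputable def degreeScaling (τ K : Type*) [CommRing K] :
    MvPolynomial τ K →ₐ[K] Polynomial (MvPolynomial τ K) :=
  aeval fun j => Polynomial.X * Polynomial.C (X j)

variable {K τ : Type*} [CommRing K]

theorem degreeScaling_of_isHomogeneous {q : MvPolynomial τ K} {e : ℕ}
    (hq : q.IsHomogeneous e) :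
    degreeScaling τ K q = Polynomial.C q * Polynomial.X ^ e := by
  rw [degreeScaling, aeval_mul_left_of_isHomogeneous hq, mul_comm]
  congr 1
  exact (DFunLike.congr_fun (aeval_unique (Polynomial.CAlgHom (R := K))) q).symm

theorem coeff_degreeScaling (q : MvPolynomial τ K) (k : ℕ) :
    (degreeScaling τ K q).coeff k = homogeneousComponent k q := by
  conv_lhs => rw [← sum_homogeneousComponent q]
  simp only [map_sum, degreeScaling_of_isHomogeneous (homogeneousComponent_isHomogeneous _ q),
    Polynomial.finsetSum_coeff, Polynomial.coeff_C_mul_X_pow, Finset.sum_ite_eq,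
    Finset.mem_range]
  split_ifs with hk
  · rfl
  · exact (homogeneousComponent_eq_zero _ q (by omega)).symm

theorem isHomogeneous_iff_degreeScaling {q : MvPolynomial τ K} {e : ℕ} :
    q.IsHomogeneous e ↔ degreeScaling τ K q = Polynomial.C q * Polynomial.X ^ e := by
  refine ⟨degreeScaling_of_isHomogeneous, fun h => ?_⟩
  have hq := coeff_degreeScaling q e
  rw [h, Polynomial.coeff_C_mul_X_pow, if_pos rfl] at hq
  exact hq ▸ homogeneousComponent_isHomogeneous e q

theorem forall_coeff_isHomogeneous_iff {σ : Type*} {P : MvPolynomial σ (MvPolynomial τ K)}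
    {e : ℕ} : (∀ d, (P.coeff d).IsHomogeneous e) ↔
      map (degreeScaling τ K).toRingHom P = C (Polynomial.X ^ e) * map Polynomial.C P := by
  simp only [MvPolynomial.ext_iff, coeff_map, coeff_C_mul, AlgHom.toRingHom_eq_coe,
    RingHom.coe_coe, isHomogeneous_iff_degreeScaling, mul_comm (Polynomial.X ^ e)]

theorem forall_coeff_isHomogeneous_of_mul [IsDomain K] {σ : Type*}
    {P Q : MvPolynomial σ (MvPolynomial τ K)} {a b : ℕ} (hP : ∀ d, (P.coeff d).IsHomogeneous a)
    (hP₀ : P ≠ 0) (hPQ : ∀ d, ((P * Q).coeff d).IsHomogeneous (a + b)) :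
    ∀ d, (Q.coeff d).IsHomogeneous b := by
  rw [forall_coeff_isHomogeneous_iff] at hP hPQ ⊢
  have hP₀' : C (Polynomial.X ^ a) * map Polynomial.C P ≠ 0 :=
    mul_ne_zero (C_ne_zero.mpr (pow_ne_zero _ Polynomial.X_ne_zero))
      ((map_injective _ Polynomial.C_injective).ne_iff' (map_zero _) |>.mpr hP₀)
  refine mul_left_cancel₀ hP₀' ?_
  calc C (Polynomial.X ^ a) * map Polynomial.C P * map (degreeScaling τ K).toRingHom Q
      = map (degreeScaling τ K).toRingHom (P * Q) := by rw [map_mul, hP]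
    _ = _ := by rw [hPQ, pow_add, C_mul, map_mul]; ring

end MvPolynomial

section AssociatedForm

variable {R : Type*} [CommRing R]

theorem Fcov_eq_aeval (f : MvPolynomial (Fin 2) R) :
    Fcov f = X 0 * aeval ![-(pderiv 1 f), pderiv 0 f] (pderiv 0 f)
      + X 1 * aeval ![-(pderiv 1 f), pderiv 0 f] (pderiv 1 f) := by
  rw [Fcov, aeval_eq_bind₁]

theorem Fcov_map {S : Type*} [CommRing S] (φ : R →+* S) (f : MvPolynomial (Fin 2) R) :
    Fcov (map φ f) = map φ (Fcov f) := by
  simp only [Fcov, map_add, map_mul, map_X, map_bind₁, pderiv_map]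
  congr <;> funext i <;> fin_cases i <;> simp

theorem Fcov_C_mul {f : MvPolynomial (Fin 2) R} {n : ℕ} (hf : f.IsHomogeneous n) (c : R) :
    Fcov (C c * f) = C c ^ n * Fcov f := by
  obtain _ | n := n
  · rw [← totalDegree_zero_iff_isHomogeneous, totalDegree_eq_zero_iff_eq_C] at hf
    rw [hf]
    simp [Fcov]
  have hw : ![-(C c * pderiv 1 f), C c * pderiv 0 f]
      = fun i => C c * ![-(pderiv 1 f), pderiv 0 f] i := by
    funext i; fin_cases i <;> simp
  have hd (i : Fin 2) : (pderiv i f).IsHomogeneous n := hf.pderiv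
  simp only [Fcov_eq_aeval, pderiv_C_mul, hw, map_mul, aeval_C, algebraMap_eq,
    aeval_mul_left_of_isHomogeneous (hd _)]
  ring

theorem MvPolynomial.IsHomogeneous.Fcov {f : MvPolynomial (Fin 2) R} {n : ℕ}
    (hf : f.IsHomogeneous n) :
    (Fcov f).IsHomogeneous (1 + (n - 1) * (n - 1)) := by
  have hw : ∀ i, (![-(pderiv 1 f), pderiv 0 f] i).IsHomogeneous (n - 1) := by
    intro i; fin_cases i
    exacts [hf.pderiv.neg, hf.pderiv]
  rw [Fcov_eq_aeval]
  exact ((isHomogeneous_X _ _).mul (hf.pderiv.aeval _ hw)).add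
    ((isHomogeneous_X _ _).mul (hf.pderiv.aeval _ hw))

theorem coeff_Fcov_isHomogeneous {K τ : Type*} [CommRing K]
    {f : MvPolynomial (Fin 2) (MvPolynomial τ K)} {n e : ℕ} (hf : f.IsHomogeneous n)
    (hc : ∀ d, (f.coeff d).IsHomogeneous e) (d : Fin 2 →₀ ℕ) :
    ((Fcov f).coeff d).IsHomogeneous (e * n) := by
  rw [forall_coeff_isHomogeneous_iff] at hc
  revert d
  rw [forall_coeff_isHomogeneous_iff, ← Fcov_map, hc, Fcov_C_mul (hf.map _), Fcov_map, ← map_pow,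
    pow_mul]

theorem MvPolynomial.IsHomogeneous.sum_X_mul_pderiv_fin_two {f : MvPolynomial (Fin 2) R} {n : ℕ}
    (hf : f.IsHomogeneous n) :
    X 0 * pderiv 0 f + X 1 * pderiv 1 f = (n : MvPolynomial (Fin 2) R) * f := by
  simpa [Fin.sum_univ_two, nsmul_eq_mul] using hf.sum_X_mul_pderiv

theorem natCast_mul_dvd_X_pow_mul_Fcov {f : MvPolynomial (Fin 2) R} {n : ℕ}
    (hf : f.IsHomogeneous n) : (n : MvPolynomial (Fin 2) R) * f ∣ X 1 ^ (n - 1) * Fcov f := by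
  set w := ![-(pderiv 1 f), pderiv 0 f]
  have hw : ∀ i, (n : MvPolynomial (Fin 2) R) * f ∣ X 1 * w i - pderiv 0 f * X i := by
    refine Fin.forall_fin_two.mpr ⟨⟨-1, ?_⟩, by simp [w, mul_comm]⟩
    simp only [w, Matrix.cons_val_zero]
    linear_combination -hf.sum_X_mul_pderiv_fin_two
  have key : X 1 ^ (n - 1) * Fcov f - pderiv 0 f ^ (n - 1) * ((n : MvPolynomial (Fin 2) R) * f)
      = X 0 * (aeval (fun i => X 1 * w i) (pderiv 0 f)
          - aeval (fun i => pderiv 0 f * X i) (pderiv 0 f))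
        + X 1 * (aeval (fun i => X 1 * w i) (pderiv 1 f)
          - aeval (fun i => pderiv 0 f * X i) (pderiv 1 f)) := by
    simp only [aeval_mul_left_of_isHomogeneous hf.pderiv, aeval_X_left_apply, Fcov_eq_aeval,
      ← hf.sum_X_mul_pderiv_fin_two]
    ring
  rw [← dvd_sub_left (dvd_mul_left _ _), key]
  exact dvd_add ((dvd_aeval_sub_aeval hw _).mul_left _) ((dvd_aeval_sub_aeval hw _).mul_left _)

theorem natCast_mul_dvd_Fcov [IsDomain R] {f : MvPolynomial (Fin 2) R} {n : ℕ}
    (hf : f.IsHomogeneous n) (hX : ¬ X 1 ∣ (n : MvPolynomial (Fin 2) R) * f) :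
    (n : MvPolynomial (Fin 2) R) * f ∣ Fcov f := by
  obtain ⟨c, hc⟩ := natCast_mul_dvd_X_pow_mul_Fcov hf
  obtain ⟨G, rfl⟩ := (X_prime (i := 1)).pow_dvd_of_dvd_mul_left (n - 1) hX ⟨Fcov f, hc.symm⟩
  refine ⟨G, mul_left_cancel₀ (pow_ne_zero (n - 1) (X_ne_zero (1 : Fin 2))) ?_⟩
  rw [hc]
  ring

end AssociatedForm

section GenericForm

variable (K : Type*) [CommRing K] (n : ℕ)

noncomputable def genericBinaryForm : MvPolynomial (Fin 2) (MvPolynomial (Fin (n + 1)) K) :=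
  ∑ i : Fin (n + 1), C (X i) * X 0 ^ (n - (i : ℕ)) * X 1 ^ (i : ℕ)

theorem isHomogeneous_genericBinaryForm : (genericBinaryForm K n).IsHomogeneous n := by
  refine IsHomogeneous.sum _ _ _ fun i _ => ?_
  have h := (isHomogeneous_C_mul_X_pow (σ := Fin 2) (X i : MvPolynomial (Fin (n + 1)) K) 0
    (n - i)).mul (isHomogeneous_X_pow 1 (i : ℕ))
  rwa [Nat.sub_add_cancel i.is_le] at h

theorem coeff_genericBinaryForm_isHomogeneous (d : Fin 2 →₀ ℕ) :
    ((genericBinaryForm K n).coeff d).IsHomogeneous 1 := by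
  revert d
  rw [forall_coeff_isHomogeneous_iff, pow_one]
  simp only [genericBinaryForm, degreeScaling, Finset.mul_sum, map_sum, map_mul, map_pow, map_C,
    map_X, AlgHom.toRingHom_eq_coe, RingHom.coe_coe, aeval_X]
  exact Finset.sum_congr rfl fun i _ => by ring

theorem bind₁_genericBinaryForm_X_zero :
    bind₁ ![X 0, 0] (genericBinaryForm K n) = C (X 0) * X 0 ^ n := by
  simp [genericBinaryForm, Fin.sum_univ_succ]

theorem not_X_dvd_natCast_mul_genericBinaryForm [NoZeroDivisors K] [CharZero K] (hn : n ≠ 0) :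
    ¬ X 1 ∣ (n : MvPolynomial (Fin 2) (MvPolynomial (Fin (n + 1)) K)) * genericBinaryForm K n := by
  rintro ⟨q, hq⟩
  have h := congrArg (bind₁ ![X 0, 0]) hq
  rw [map_mul, map_mul, bind₁_genericBinaryForm_X_zero, bind₁_X_right] at h
  simp [hn] at h

end GenericForm

/-- For the generic binary form `f = Σ a_i x^{n-i} z^i` of degree `n ≥ 3`
over `R = ℚ[a₀,…,aₙ]`, `n·f` divides `F_f` and the quotient `G_f = F_f/(n·f)` is homogeneous
of degree `(n-1)(n-2)` in `(x,z)`, with every coefficient homogeneous of degree `n-1`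
in `a₀, …, aₙ`. -/
theorem stmt5 (n : ℕ) (hn : 3 ≤ n)
    (f : MvPolynomial (Fin 2) (MvPolynomial (Fin (n + 1)) ℚ))
    (hf : f = ∑ i : Fin (n + 1),
      C (X i) * X 0 ^ (n - (i : ℕ)) * X 1 ^ (i : ℕ)) :
    ∃ G : MvPolynomial (Fin 2) (MvPolynomial (Fin (n + 1)) ℚ),
      Fcov f = (n : MvPolynomial (Fin 2) (MvPolynomial (Fin (n + 1)) ℚ)) * f * G ∧
      G.IsHomogeneous ((n - 1) * (n - 2)) ∧
      ∀ d : Fin 2 →₀ ℕ, (G.coeff d).IsHomogeneous (n - 1) := by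
  change f = genericBinaryForm ℚ n at hf
  subst hf
  have hX := not_X_dvd_natCast_mul_genericBinaryForm ℚ n (by omega)
  have hnf : (n : MvPolynomial (Fin 2) (MvPolynomial (Fin (n + 1)) ℚ)) * genericBinaryForm ℚ n
      ≠ 0 := fun h => hX (h ▸ dvd_zero _)
  have hf := isHomogeneous_genericBinaryForm ℚ n
  obtain ⟨G, hG⟩ := natCast_mul_dvd_Fcov hf hX
  refine ⟨G, hG, ?_, ?_⟩
  · refine IsHomogeneous.of_mul_left (by simpa using hf.C_mul (n : MvPolynomial (Fin (n + 1)) ℚ))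
      hnf ?_
    have hdeg : n + (n - 1) * (n - 2) = 1 + (n - 1) * (n - 1) := by
      zify [(by omega : 1 ≤ n), (by omega : 2 ≤ n)]
      ring
    rw [← hG, hdeg]
    exact hf.Fcov
  · refine forall_coeff_isHomogeneous_of_mul (a := 1) (fun d => ?_) hnf fun d => ?_
    · rw [← map_natCast C, coeff_C_mul]
      simpa using (coeff_genericBinaryForm_isHomogeneous ℚ n d).C_mul (n : ℚ)
    · rw [← hG, show 1 + (n - 1) = 1 * n by omega]
      exact coeff_Fcov_isHomogeneous hf (coeff_genericBinaryForm_isHomogeneous ℚ n) d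
end

section
/- Let f(x,z) ∈ ℂ[x,z] be a binary form of degree n ≥ 2 whose coefficient of xⁿ is c ≠ 0, and let α₁, …, αₙ be the roots of f(x,1) counted with multiplicity, so Δ(f) := c^{2n−2} · ∏_{i<j}(α_i − α_j)². Let M = [[a,b],[c',d]] ∈ GL₂(ℂ) and f^M(x,z) := f(ax + bz, c'x + dz), and suppose the coefficient of xⁿ in f^M is also nonzero. Then Δ(f^M) = (det M)^{n(n−1)} · Δ(f). -/
/-!
Substituting shows `f^M(x, 1) = c₂ ∏ (x - γᵢ)` with `c₂ = c ∏ (a - c'αᵢ)` and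
`γᵢ = (dαᵢ - b) / (a - c'αᵢ)`, the image of `αᵢ` under the inverse Möbius map of `M`.
So the `βᵢ` are a permutation of the `γᵢ`, and
`(γᵢ - γⱼ)(a - c'αᵢ)(a - c'αⱼ) = (det M)(αᵢ - αⱼ)`. Each factor `a - c'αᵢ` occurs in `n - 1`
of the pairs `i < j`, so squaring and multiplying over all pairs, the denominators combine to
`(∏ (a - c'αᵢ))^{2n-2} = (c₂ / c)^{2n-2}`.
-/

open MvPolynomial Finset

lemma exists_perm_comp_eq_of_map_univ_eq {ι α : Type*} [Fintype ι] [DecidableEq α]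
    {β γ : ι → α} (h : univ.val.map β = univ.val.map γ) :
    ∃ σ : Equiv.Perm ι, γ ∘ σ = β := by
  classical
  have hcard (v : α) : Fintype.card {i // β i = v} = Fintype.card {i // γ i = v} := by
    have := congrArg (Multiset.count v) h
    simp only [Multiset.count_map] at this
    simpa [Fintype.card_subtype, Finset.card, filter_val, eq_comm] using this
  exact ⟨Equiv.ofFiberEquiv fun v => Fintype.equivOfCardEq (hcard v),
    funext (Equiv.ofFiberEquiv_map _)⟩

lemma map_univ_eq_of_forall_prod_sub_eq {ι K : Type*} [Fintype ι] [Field K] [Infinite K]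
    {β γ : ι → K} (h : ∀ x, ∏ i, (x - β i) = ∏ i, (x - γ i)) :
    univ.val.map β = univ.val.map γ := by
  have hroots (g : ι → K) : (∏ i, (Polynomial.X - Polynomial.C (g i))).roots = univ.val.map g := by
    rw [← Polynomial.roots_multiset_prod_X_sub_C (univ.val.map g), Multiset.map_map]
    rfl
  rw [← hroots, ← hroots]
  congr 1
  exact Polynomial.funext fun x => by simpa [Polynomial.eval_prod] using h x

lemma prod_Ioi_mul_self {M : Type*} [CommMonoid M] {n : ℕ} (u : Fin n → M) :
    ∏ i, ∏ j ∈ Ioi i, u i * u j = (∏ i, u i) ^ (n - 1) := by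
  have hswap : ∏ i, ∏ j ∈ Ioi i, u j = ∏ j, ∏ _i ∈ Iio j, u j :=
    prod_comm' fun i j => by simp [and_comm]
  calc ∏ i, ∏ j ∈ Ioi i, u i * u j
      = (∏ i, u i ^ (n - 1 - (i : ℕ))) * ∏ j, u j ^ (j : ℕ) := by
        simp_rw [prod_mul_distrib, hswap, prod_const, Fin.card_Ioi, Fin.card_Iio]
    _ = ∏ i, u i ^ (n - 1) := by
        rw [← prod_mul_distrib]
        refine prod_congr rfl fun i _ => ?_
        rw [← pow_add]
        congr 1
        omega
    _ = (∏ i, u i) ^ (n - 1) := prod_pow _ _ _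

/-- The discriminant of the monic polynomial `∏ i, (X - γ i)`. -/
def discrOfRoots {R : Type*} [CommRing R] {n : ℕ} (γ : Fin n → R) : R :=
  ∏ i, ∏ j ∈ Ioi i, (γ i - γ j) ^ 2

section discrOfRoots

variable {R : Type*} [CommRing R] {n : ℕ}

lemma discrOfRoots_eq_det_vandermonde_sq (γ : Fin n → R) :
    discrOfRoots γ = (Matrix.vandermonde γ).det ^ 2 := by
  rw [discrOfRoots, Matrix.det_vandermonde, ← prod_pow]
  exact prod_congr rfl fun i _ => by
    rw [← prod_pow]
    exact prod_congr rfl fun j _ => by rw [← neg_sub, neg_sq]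

lemma discrOfRoots_comp_perm (γ : Fin n → R) (σ : Equiv.Perm (Fin n)) :
    discrOfRoots (γ ∘ σ) = discrOfRoots γ := by
  have hV : Matrix.vandermonde (γ ∘ σ) = (Matrix.vandermonde γ).submatrix σ id := rfl
  rw [discrOfRoots_eq_det_vandermonde_sq, hV, Matrix.det_permute, mul_pow,
    ← discrOfRoots_eq_det_vandermonde_sq]
  rcases Int.units_eq_one_or (Equiv.Perm.sign σ) with h | h <;> simp [h]

lemma discrOfRoots_eq_of_forall_prod_sub_eq {K : Type*} [Field K] [Infinite K] {β γ : Fin n → K}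
    (h : ∀ x, ∏ i, (x - β i) = ∏ i, (x - γ i)) : discrOfRoots β = discrOfRoots γ := by
  classical
  obtain ⟨σ, hσ⟩ := exists_perm_comp_eq_of_map_univ_eq (map_univ_eq_of_forall_prod_sub_eq h)
  rw [← hσ, discrOfRoots_comp_perm]

lemma discrOfRoots_mul_prod_pow_of_sub_mul {α γ u : Fin n → R} {D : R}
    (h : ∀ i j, (γ i - γ j) * (u i * u j) = (α i - α j) * D) :
    discrOfRoots γ * (∏ i, u i) ^ (2 * n - 2) = D ^ (n * (n - 1)) * discrOfRoots α := by
  have hu := prod_Ioi_mul_self fun i => u i ^ 2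
  have hD := prod_Ioi_mul_self fun _ : Fin n => D
  rw [prod_pow, ← pow_mul, Nat.mul_sub_one] at hu
  rw [prod_const, card_univ, Fintype.card_fin, ← pow_mul] at hD
  calc discrOfRoots γ * (∏ i, u i) ^ (2 * n - 2)
      = ∏ i, ∏ j ∈ Ioi i, ((γ i - γ j) * (u i * u j)) ^ 2 := by
        simp_rw [discrOfRoots, ← hu, ← prod_mul_distrib, mul_pow]
    _ = ∏ i, ∏ j ∈ Ioi i, ((α i - α j) * D) ^ 2 := by simp_rw [h]
    _ = D ^ (n * (n - 1)) * discrOfRoots α := by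
        simp_rw [discrOfRoots, ← hD, ← prod_mul_distrib]
        exact prod_congr rfl fun i _ => prod_congr rfl fun j _ => by ring

end discrOfRoots

lemma eval_bind₁_linear_prod_sub {R : Type*} [CommRing R] {n : ℕ} (c a b c' d : R)
    (α : Fin n → R) (v : ℕ → R) :
    eval v (bind₁ ![C a * X 0 + C b * X 1, C c' * X 0 + C d * X 1]
        (C c * ∏ i, (X 0 - C (α i) * X 1)))
      = c * ∏ i, ((a - α i * c') * v 0 + (b - α i * d) * v 1) := by
  simp only [map_mul, map_prod, map_sub, bind₁_X_right, bind₁_C_right, eval_C, map_add, eval_X,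
    Matrix.cons_val_zero, Matrix.cons_val_one]
  exact congrArg _ (prod_congr rfl fun i _ => by ring)

theorem stmt10_general (n : ℕ) (c : ℂ)
    (α : Fin n → ℂ) (f : MvPolynomial (Fin 2) ℂ)
    (hf : f = C c * ∏ i : Fin n, (X 0 - C (α i) * X 1))
    (a b c' d : ℂ)
    (c₂ : ℂ) (hc₂ : c₂ ≠ 0) (β : Fin n → ℂ)
    (hfM : bind₁ ![C a * X 0 + C b * X 1, C c' * X 0 + C d * X 1] f
      = C c₂ * ∏ i : Fin n, (X 0 - C (β i) * X 1)) :
    c₂ ^ (2 * n - 2) * ∏ i : Fin n, ∏ j ∈ Finset.Ioi i, (β i - β j) ^ 2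
      = (a * d - b * c') ^ (n * (n - 1)) *
          (c ^ (2 * n - 2) * ∏ i : Fin n, ∏ j ∈ Finset.Ioi i, (α i - α j) ^ 2) := by
  set u : Fin n → ℂ := fun i => a - α i * c'
  have hform (x z : ℂ) : c * ∏ i, (u i * x + (b - α i * d) * z) = c₂ * ∏ i, (x - β i * z) := by
    have h := congrArg (eval fun k => if k = 0 then x else z) hfM
    rw [hf, eval_bind₁_linear_prod_sub] at h
    simpa using h
  have hlead : c * ∏ i, u i = c₂ := by simpa using hform 1 0
  have hu (i : Fin n) : u i ≠ 0 := fun h0 =>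
    hc₂ (by rw [← hlead, prod_eq_zero (mem_univ i) h0, mul_zero])
  set γ : Fin n → ℂ := fun i => (α i * d - b) / u i
  have hγ (i : Fin n) : u i * γ i = α i * d - b := mul_div_cancel₀ _ (hu i)
  have hβγ : discrOfRoots β = discrOfRoots γ := by
    refine discrOfRoots_eq_of_forall_prod_sub_eq fun x => mul_left_cancel₀ hc₂ ?_
    have hfactor (i : Fin n) : u i * x + (b - α i * d) = u i * (x - γ i) := by
      linear_combination hγ i
    have h := hform x 1
    simp only [mul_one] at h
    rw [prod_congr rfl fun i _ => hfactor i, prod_mul_distrib, ← mul_assoc, hlead] at h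
    exact h.symm
  have hγα : discrOfRoots γ * (∏ i, u i) ^ (2 * n - 2)
      = (a * d - b * c') ^ (n * (n - 1)) * discrOfRoots α :=
    discrOfRoots_mul_prod_pow_of_sub_mul fun i j => by linear_combination u j * hγ i - u i * hγ j
  change c₂ ^ (2 * n - 2) * discrOfRoots β = _ * (_ * discrOfRoots α)
  rw [hβγ, ← hlead, mul_pow]
  linear_combination c ^ (2 * n - 2) * hγα

/-- Let `f(x,z) = c ∏ (x - α_i z)` be a binary form of degree `n ≥ 2` over
`ℂ` with nonzero `xⁿ`-coefficient `c`, so `Δ(f) = c^{2n-2} ∏_{i<j} (α_i - α_j)²`.  If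
`M = [[a,b],[c',d]] ∈ GL₂(ℂ)` and `f^M(x,z) = f(ax+bz, c'x+dz) = c₂ ∏ (x - β_i z)` with
`c₂ ≠ 0`, then `Δ(f^M) = (det M)^{n(n-1)} Δ(f)`. -/
theorem stmt10 (n : ℕ) (hn : 2 ≤ n) (c : ℂ) (hc : c ≠ 0)
    (α : Fin n → ℂ) (f : MvPolynomial (Fin 2) ℂ)
    (hf : f = C c * ∏ i : Fin n, (X 0 - C (α i) * X 1))
    (a b c' d : ℂ) (hdet : a * d - b * c' ≠ 0)
    (c₂ : ℂ) (hc₂ : c₂ ≠ 0) (β : Fin n → ℂ)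
    (hfM : bind₁ ![C a * X 0 + C b * X 1, C c' * X 0 + C d * X 1] f
      = C c₂ * ∏ i : Fin n, (X 0 - C (β i) * X 1)) :
    c₂ ^ (2 * n - 2) * ∏ i : Fin n, ∏ j ∈ Finset.Ioi i, (β i - β j) ^ 2
      = (a * d - b * c') ^ (n * (n - 1)) *
          (c ^ (2 * n - 2) * ∏ i : Fin n, ∏ j ∈ Finset.Ioi i, (α i - α j) ^ 2) :=
  stmt10_general n c α f hf a b c' d c₂ hc₂ β hfM
end

section
/- Let g(t) ∈ ℤ[t] be a cubic polynomial with nonzero leading coefficient, let f(x) = g(x²) ∈ ℤ[x] (a degree-6 polynomial, corresponding to a genus 2 curve y² = g(x²) with an extra involution), and suppose Δ(f) ≠ 0 and that for every prime p the p-adic valuation satisfies v_p(Δ(f)) < 15. Then for every nonzero u ∈ ℚ such that the polynomial h(x) := u³·g(x²/u) has integer coefficients, one has |Δ(h)| ≥ |Δ(f)|. -/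
/-!
Choose `s ∈ ℂ` with `s² = u`. Then `h(s x) = u³ f(x)`, so the roots of `h` are `s` times those of
`f`, and since `∏_{i<j} (αᵢ - αⱼ)²` depends only on the multiset of roots (up to sign it is
`∏ᵢ P'(αᵢ)` for `P = ∏ (X - αᵢ)`), `Δ(h) = u¹⁵ Δ(f)`. Writing `u = a / b` in lowest terms, `b¹⁵`
divides `Δ(f)`; as no fifteenth power of a prime does, `b = 1`. So `u` is a nonzero integer and
`|Δ(h)| = |u|¹⁵ |Δ(f)| ≥ |Δ(f)|`.
-/

open Polynomial Finset

theorem map_univ_eq_of_prod_X_sub_C_eq {R ι : Type*} [CommRing R] [IsDomain R] [Fintype ι]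
    {x y : ι → R} (h : ∏ i, (X - C (x i)) = ∏ i, (X - C (y i))) :
    univ.val.map x = univ.val.map y := by
  have hroots (z : ι → R) : (∏ i, (X - C (z i))).roots = univ.val.map z := by
    rw [prod_eq_multiset_prod, ← roots_multiset_prod_X_sub_C (univ.val.map z), Multiset.map_map]
    rfl
  rw [← hroots, h, hroots]

section PairProduct

variable {R ι : Type*} [CommRing R] [Fintype ι] [LinearOrder ι] [LocallyFiniteOrderTop ι]

theorem prod_prod_Ioi_sub_sq_eq_prod_eval_derivative [LocallyFiniteOrderBot ι] (x : ι → R) :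
    ∏ i, ∏ j ∈ Ioi i, (x i - x j) ^ 2
      = (-1) ^ (∑ i : ι, #(Ioi i)) * ∏ i, eval (x i) (derivative (∏ j, (X - C (x j)))) := by
  classical
  have hsq (a b : R) : (a - b) ^ 2 = -1 * ((a - b) * (b - a)) := by ring
  simp only [hsq, prod_mul_distrib (f := fun _ => (-1 : R)), prod_const]
  rw [prod_mul_distrib, prod_pow_eq_pow_sum,
    prod_prod_Ioi_mul_eq_prod_prod_off_diag fun j i => x i - x j]
  congr 1
  refine prod_congr rfl fun i _ => ?_
  -- `P'(xᵢ) = ∏_{j ≠ i} (xᵢ - xⱼ)` holds even when the `xⱼ` are not distinct.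
  rw [← Lagrange.nodal, Lagrange.eval_nodal_derivative_eval_node_eq (mem_univ i),
    Lagrange.eval_nodal, compl_singleton]

theorem prod_prod_Ioi_sub_sq_eq_of_prod_X_sub_C_eq [LocallyFiniteOrderBot ι] [IsDomain R]
    {x y : ι → R} (h : ∏ i, (X - C (x i)) = ∏ i, (X - C (y i))) :
    ∏ i, ∏ j ∈ Ioi i, (x i - x j) ^ 2 = ∏ i, ∏ j ∈ Ioi i, (y i - y j) ^ 2 := by
  have hprod (z : ι → R) (Q : R[X]) :
      ∏ i, eval (z i) Q = ((univ.val.map z).map fun r => eval r Q).prod := by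
    rw [Multiset.map_map]; rfl
  rw [prod_prod_Ioi_sub_sq_eq_prod_eval_derivative, prod_prod_Ioi_sub_sq_eq_prod_eval_derivative,
    h, hprod x, hprod y, map_univ_eq_of_prod_X_sub_C_eq h]

theorem prod_prod_Ioi_mul_sub_mul_sq (a : R) (x : ι → R) :
    ∏ i, ∏ j ∈ Ioi i, (a * x i - a * x j) ^ 2
      = (a ^ 2) ^ (∑ i : ι, #(Ioi i)) * ∏ i, ∏ j ∈ Ioi i, (x i - x j) ^ 2 := by
  simp only [← mul_sub, mul_pow, prod_mul_distrib, prod_const, prod_pow_eq_pow_sum]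

end PairProduct

theorem prod_X_sub_C_comp_C_mul_X {K ι : Type*} [Field K] [Fintype ι] (x : ι → K) {a : K}
    (ha : a ≠ 0) :
    (∏ i, (X - C (x i))).comp (C a * X) = C (a ^ Fintype.card ι) * ∏ i, (X - C (a⁻¹ * x i)) := by
  have hfac (i : ι) : C a * X - C (x i) = C a * (X - C (a⁻¹ * x i)) := by
    rw [mul_sub, ← C_mul, mul_inv_cancel_left₀ ha]
  simp only [Polynomial.prod_comp, sub_comp, X_comp, C_comp, hfac, prod_mul_distrib, prod_const,
    C_pow, card_univ]

theorem comp_X_sq_of_natDegree_le_three {R : Type*} [CommSemiring R] {g : R[X]}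
    (hg : g.natDegree ≤ 3) :
    g.comp (X ^ 2) = C (g.coeff 3) * X ^ 6 + C (g.coeff 2) * X ^ 4 + C (g.coeff 1) * X ^ 2
      + C (g.coeff 0) := by
  conv_lhs => rw [g.as_sum_range' 4 (by omega)]
  simp only [sum_range_succ, sum_range_zero, zero_add, ← C_mul_X_pow_eq_monomial, add_comp,
    mul_comp, C_comp, X_pow_comp, ← pow_mul]
  ring

theorem comp_C_mul_X_eq_C_pow_mul_comp_X_sq {R : Type*} [CommRing R] {g : R[X]}
    (hg : g.natDegree ≤ 3) (s : R) :
    (C (g.coeff 3) * X ^ 6 + C (g.coeff 2 * s ^ 2) * X ^ 4 + C (g.coeff 1 * (s ^ 2) ^ 2) * X ^ 2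
      + C (g.coeff 0 * (s ^ 2) ^ 3)).comp (C s * X) = C (s ^ 6) * g.comp (X ^ 2) := by
  rw [comp_X_sq_of_natDegree_le_three hg]
  simp only [add_comp, mul_comp, C_comp, pow_comp, X_comp, C_mul, C_pow]
  ring

theorem den_pow_dvd_of_cast_eq_pow_mul {n : ℕ} {D D' : ℤ} {u : ℚ} (h : (D' : ℚ) = u ^ n * D) :
    (u.den : ℤ) ^ n ∣ D := by
  have hcop : IsCoprime ((u.den : ℤ) ^ n) (u.num ^ n) := u.isCoprime_num_den.symm.pow
  refine hcop.dvd_of_dvd_mul_left ⟨D', ?_⟩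
  have : (u.num : ℚ) ^ n * D = u.den ^ n * D' := by
    rw [h, ← Rat.mul_den_eq_num]; ring
  exact_mod_cast this

theorem eq_one_of_pow_dvd_of_padicValInt_lt {n d : ℕ} {D : ℤ} (hD : D ≠ 0)
    (hval : ∀ p : ℕ, p.Prime → padicValInt p D < n) (hd : (d : ℤ) ^ n ∣ D) : d = 1 := by
  by_contra hd1
  obtain ⟨p, hp, hpd⟩ := Nat.exists_prime_and_dvd hd1
  have : Fact p.Prime := ⟨hp⟩
  have hpD : (p : ℤ) ^ n ∣ D :=
    (pow_dvd_pow_of_dvd (Int.natCast_dvd_natCast.mpr hpd) n).trans hd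
  exact (hval p hp).not_ge (((padicValInt_dvd_iff n D).mp hpD).resolve_left hD)

theorem abs_le_abs_of_cast_eq_pow_mul {n : ℕ} {D D' : ℤ} {u : ℚ} (hu : u ≠ 0)
    (hval : ∀ p : ℕ, p.Prime → padicValInt p D < n) (h : (D' : ℚ) = u ^ n * D) :
    |D| ≤ |D'| := by
  rcases eq_or_ne D 0 with rfl | hD
  · simp
  have hden := eq_one_of_pow_dvd_of_padicValInt_lt hD hval (den_pow_dvd_of_cast_eq_pow_mul h)
  have hD' : D' = u.num ^ n * D := by
    rw [← Rat.coe_int_num_of_den_eq_one hden] at h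
    exact_mod_cast h
  rw [hD', abs_mul, abs_pow]
  exact le_mul_of_one_le_left (abs_nonneg D)
    (one_le_pow₀ (Int.one_le_abs (Rat.num_ne_zero.mpr hu)))

theorem stmt12_general (g : Polynomial ℤ) (hg3 : g.natDegree = 3) (hlc : g.coeff 3 ≠ 0)
    (f : Polynomial ℤ) (hf : f = g.comp (X ^ 2))
    (α : Fin 6 → ℂ)
    (hroots : f.map (Int.castRingHom ℂ)
      = C ((g.coeff 3 : ℂ)) * ∏ i : Fin 6, (X - C (α i)))
    (D : ℤ)
    (hD : (D : ℂ) = (g.coeff 3 : ℂ) ^ 10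
      * ∏ i : Fin 6, ∏ j ∈ Finset.Ioi i, (α i - α j) ^ 2)
    (hval : ∀ p : ℕ, p.Prime → padicValInt p D < 15)
    (u : ℚ) (hu : u ≠ 0)
    (H : Polynomial ℤ)
    (hH : H.map (Int.castRingHom ℚ)
      = C ((g.coeff 3 : ℚ)) * X ^ 6 + C ((g.coeff 2 : ℚ) * u) * X ^ 4
        + C ((g.coeff 1 : ℚ) * u ^ 2) * X ^ 2 + C ((g.coeff 0 : ℚ) * u ^ 3))
    (β : Fin 6 → ℂ)
    (hβ : H.map (Int.castRingHom ℂ)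
      = C ((g.coeff 3 : ℂ)) * ∏ i : Fin 6, (X - C (β i)))
    (D' : ℤ)
    (hD' : (D' : ℂ) = (g.coeff 3 : ℂ) ^ 10
      * ∏ i : Fin 6, ∏ j ∈ Finset.Ioi i, (β i - β j) ^ 2) :
    |D| ≤ |D'| := by
  obtain ⟨s, hs⟩ := IsAlgClosed.exists_pow_nat_eq (u : ℂ) two_pos
  have hs0 : s ≠ 0 := by
    rintro rfl
    exact hu (by exact_mod_cast hs.symm.trans (zero_pow two_ne_zero))
  have hHℂ : H.map (Int.castRingHom ℂ) = C (g.coeff 3 : ℂ) * X ^ 6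
      + C ((g.coeff 2 : ℂ) * u) * X ^ 4 + C ((g.coeff 1 : ℂ) * u ^ 2) * X ^ 2
      + C ((g.coeff 0 : ℂ) * u ^ 3) := by
    rw [show Int.castRingHom ℂ = (Rat.castHom ℂ).comp (Int.castRingHom ℚ) from RingHom.ext_int _ _,
      ← Polynomial.map_map, hH]
    simp
  have hcomp : (H.map (Int.castRingHom ℂ)).comp (C s * X)
      = C (s ^ 6) * f.map (Int.castRingHom ℂ) := by
    rw [hf, Polynomial.map_comp, Polynomial.map_pow, map_X, ← comp_C_mul_X_eq_C_pow_mul_comp_X_sq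
      (natDegree_map_le.trans hg3.le), hHℂ, hs]
    simp
  set γ : Fin 6 → ℂ := fun i => s⁻¹ * β i
  have hγ : ∏ i, (X - C (γ i)) = ∏ i, (X - C (α i)) := by
    rw [hβ, hroots, mul_comp, C_comp, prod_X_sub_C_comp_C_mul_X _ hs0, Fintype.card_fin] at hcomp
    refine mul_left_cancel₀ (?_ : C (g.coeff 3 : ℂ) * C (s ^ 6) ≠ 0) ?_
    · simp [hs0, hlc]
    · linear_combination hcomp
  have hDu : (D' : ℂ) = (u : ℂ) ^ 15 * D := by
    have hβγ : β = fun i => s * γ i := by ext i; simp [γ, hs0]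
    rw [hD', hD, hβγ, prod_prod_Ioi_mul_sub_mul_sq, prod_prod_Ioi_sub_sq_eq_of_prod_X_sub_C_eq hγ,
      hs, show ∑ i : Fin 6, #(Ioi i) = 15 from rfl]
    ring
  exact abs_le_abs_of_cast_eq_pow_mul hu hval (by exact_mod_cast hDu)

/-- Let `g ∈ ℤ[t]` be a cubic with nonzero leading coefficient and
`f(x) = g(x²)`, with discriminant `Δ(f) = D = c^{10} ∏_{i<j}(α_i - α_j)² ∈ ℤ` (where
`c = g.coeff 3` is the leading coefficient and `α_i` the complex roots of `f`), `D ≠ 0`,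
and `v_p(D) < 15` for every prime `p`.  Then for every nonzero `u ∈ ℚ` such that
`h(x) = u³·g(x²/u) = a₃x⁶ + a₂u x⁴ + a₁u² x² + a₀u³` has integer coefficients (say `h = H`
with `H ∈ ℤ[x]`), the discriminant `D' = Δ(h)` satisfies `|D'| ≥ |D|`. -/
theorem stmt12 (g : Polynomial ℤ) (hg3 : g.natDegree = 3) (hlc : g.coeff 3 ≠ 0)
    (f : Polynomial ℤ) (hf : f = g.comp (X ^ 2))
    (α : Fin 6 → ℂ)
    (hroots : f.map (Int.castRingHom ℂ)
      = C ((g.coeff 3 : ℂ)) * ∏ i : Fin 6, (X - C (α i)))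
    (D : ℤ)
    (hD : (D : ℂ) = (g.coeff 3 : ℂ) ^ 10
      * ∏ i : Fin 6, ∏ j ∈ Finset.Ioi i, (α i - α j) ^ 2)
    (hD0 : D ≠ 0)
    (hval : ∀ p : ℕ, p.Prime → padicValInt p D < 15)
    (u : ℚ) (hu : u ≠ 0)
    (H : Polynomial ℤ)
    (hH : H.map (Int.castRingHom ℚ)
      = C ((g.coeff 3 : ℚ)) * X ^ 6 + C ((g.coeff 2 : ℚ) * u) * X ^ 4
        + C ((g.coeff 1 : ℚ) * u ^ 2) * X ^ 2 + C ((g.coeff 0 : ℚ) * u ^ 3))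
    (β : Fin 6 → ℂ)
    (hβ : H.map (Int.castRingHom ℂ)
      = C ((g.coeff 3 : ℂ)) * ∏ i : Fin 6, (X - C (β i)))
    (D' : ℤ)
    (hD' : (D' : ℂ) = (g.coeff 3 : ℂ) ^ 10
      * ∏ i : Fin 6, ∏ j ∈ Finset.Ioi i, (β i - β j) ^ 2) :
    |D| ≤ |D'| :=
  stmt12_general g hg3 hlc f hf α hroots D hD hval u hu H hH β hβ D' hD'
end

section
/- Let R = ℚ[a₀, a₁, a₂, a₃, a₄, a₅] and let f = a₀x⁵ + a₁x⁴z + a₂x³z² + a₃x²z³ + a₄xz⁴ + a₅z⁵ ∈ R[x,z] be the generic binary quintic, with associated covariant G_f = F_f/(5·f), a homogeneous polynomial of degree 12 in (x,z). Then the coefficient of x¹² in G_f equals 125a₀³a₄ − 50a₀²a₁a₃ + 15a₀a₁²a₂ − 3a₁⁴, and the coefficient of z¹² in G_f equals 125a₁a₅³ − 50a₂a₄a₅² + 15a₃a₄²a₅ − 3a₄⁴. -/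
open MvPolynomial

/-!
Setting `z = 0` is a ring homomorphism `ℚ[a][x, z] → ℚ[a][x]` that keeps exactly the pure
`x`-coefficients. It sends `f`, `f_x`, `f_z` to `a₀x⁵`, `5a₀x⁴`, `a₁x⁴`, hence `F_f` to
`x · f_x(-a₁x⁴, 5a₀x⁴) = 5a₀x⁵ · c₀x¹²`, with `c₀` the claimed `x¹²`-coefficient. Cancelling
`5a₀x⁵` in the domain `ℚ[a][x]` shows that the image of `G` is `c₀x¹²`. Setting `x = 0` gives
the `z¹²`-coefficient in the same way.
-/

section RestrictAxis

variable {R σ : Type*} [CommSemiring R] [DecidableEq σ]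

noncomputable def restrictAxis (i : σ) : MvPolynomial σ R →ₐ[R] Polynomial R :=
  aeval (Pi.single i Polynomial.X)

lemma restrictAxis_monomial_of_ne_single {i : σ} {s : σ →₀ ℕ} (hs : s ≠ Finsupp.single i (s i))
    (c : R) : restrictAxis i (monomial s c) = 0 := by
  obtain ⟨j, hj⟩ : ∃ j, s j ≠ Finsupp.single i (s i) j := by
    by_contra! h
    exact hs (Finsupp.ext h)
  have hji : j ≠ i := by rintro rfl; simp at hj
  rw [Finsupp.single_eq_of_ne hji] at hj
  rw [restrictAxis, aeval_monomial, Finsupp.prod,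
    Finset.prod_eq_zero (Finsupp.mem_support_iff.2 hj), mul_zero]
  simp [Pi.single_eq_of_ne hji, hj]

lemma coeff_restrictAxis (i : σ) (p : MvPolynomial σ R) (k : ℕ) :
    (restrictAxis i p).coeff k = p.coeff (Finsupp.single i k) := by
  induction p using MvPolynomial.induction_on' with
  | monomial s c =>
    rw [coeff_monomial]
    by_cases hs : s = Finsupp.single i (s i)
    · rw [hs, restrictAxis, aeval_monomial, Finsupp.prod_single_index (by simp)]
      simp [(Finsupp.single_injective i).eq_iff, eq_comm]
    · rw [restrictAxis_monomial_of_ne_single hs, Polynomial.coeff_zero, if_neg]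
      rintro rfl
      simp at hs
  | add p q hp hq => simp [hp, hq]

end RestrictAxis

lemma restrictAxis_Fcov {R : Type*} [CommRing R] (f : MvPolynomial (Fin 2) R) (i : Fin 2) :
    restrictAxis i (Fcov f) = Polynomial.X *
      aeval ![-restrictAxis i (pderiv 1 f), restrictAxis i (pderiv 0 f)] (pderiv i f) := by
  have hsubst : (fun j => restrictAxis i (![-(pderiv 1 f), pderiv 0 f] j))
      = ![-restrictAxis i (pderiv 1 f), restrictAxis i (pderiv 0 f)] := by
    ext j : 1
    fin_cases j <;> simp
  rw [Fcov, map_add, map_mul, map_mul, restrictAxis, aeval_bind₁, aeval_bind₁, ← restrictAxis,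
    hsubst]
  fin_cases i <;> simp [restrictAxis]

lemma coeff_single_eq_of_restrictAxis_eq {R σ : Type*} [CommRing R] [IsDomain R]
    [DecidableEq σ] {i : σ} {P a G : MvPolynomial σ R} {c : R} {k : ℕ} (hP : P = a * G)
    (ha : restrictAxis i a ≠ 0)
    (hPa : restrictAxis i P = restrictAxis i a * (Polynomial.C c * Polynomial.X ^ k)) :
    G.coeff (Finsupp.single i k) = c := by
  have hG : restrictAxis i G = Polynomial.C c * Polynomial.X ^ k :=
    mul_left_cancel₀ ha (by rw [← map_mul, ← hP, hPa])
  rw [← coeff_restrictAxis, hG, Polynomial.coeff_C_mul_X_pow, if_pos rfl]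

noncomputable def genericQuintic : MvPolynomial (Fin 2) (MvPolynomial (Fin 6) ℚ) :=
  ∑ i : Fin 6, C (X i) * X 0 ^ (5 - (i : ℕ)) * X 1 ^ (i : ℕ)

lemma genericQuintic_eq : genericQuintic =
    C (X 0) * X 0 ^ 5 + C (X 1) * X 0 ^ 4 * X 1 + C (X 2) * X 0 ^ 3 * X 1 ^ 2
      + C (X 3) * X 0 ^ 2 * X 1 ^ 3 + C (X 4) * X 0 * X 1 ^ 4 + C (X 5) * X 1 ^ 5 := by
  simp [genericQuintic, Fin.sum_univ_six]

lemma pderiv_zero_genericQuintic : pderiv 0 genericQuintic =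
    5 * C (X 0) * X 0 ^ 4 + 4 * C (X 1) * X 0 ^ 3 * X 1 + 3 * C (X 2) * X 0 ^ 2 * X 1 ^ 2
      + 2 * C (X 3) * X 0 * X 1 ^ 3 + C (X 4) * X 1 ^ 4 := by
  simp only [genericQuintic_eq, map_add, Derivation.leibniz, Derivation.leibniz_pow, pderiv_X,
    Pi.single_eq_same, ne_eq, one_ne_zero, not_false_eq_true, Pi.single_eq_of_ne,
    derivation_C, smul_eq_mul, nsmul_eq_mul]
  ring

lemma pderiv_one_genericQuintic : pderiv 1 genericQuintic =
    C (X 1) * X 0 ^ 4 + 2 * C (X 2) * X 0 ^ 3 * X 1 + 3 * C (X 3) * X 0 ^ 2 * X 1 ^ 2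
      + 4 * C (X 4) * X 0 * X 1 ^ 3 + 5 * C (X 5) * X 1 ^ 4 := by
  simp only [genericQuintic_eq, map_add, Derivation.leibniz, Derivation.leibniz_pow, pderiv_X,
    Pi.single_eq_same, ne_eq, zero_ne_one, not_false_eq_true, Pi.single_eq_of_ne,
    derivation_C, smul_eq_mul, nsmul_eq_mul]
  ring

lemma restrictAxis_zero_genericQuintic :
    restrictAxis 0 genericQuintic = Polynomial.C (X 0) * Polynomial.X ^ 5 := by
  simp [genericQuintic_eq, restrictAxis]

lemma restrictAxis_one_genericQuintic :
    restrictAxis 1 genericQuintic = Polynomial.C (X 5) * Polynomial.X ^ 5 := by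
  simp [genericQuintic_eq, restrictAxis]

lemma restrictAxis_five_mul_genericQuintic_ne_zero (i : Fin 2) :
    restrictAxis i (5 * genericQuintic) ≠ 0 := by
  fin_cases i <;>
    simp [restrictAxis_zero_genericQuintic, restrictAxis_one_genericQuintic, map_ofNat,
      X_ne_zero, Polynomial.X_ne_zero]

lemma restrictAxis_zero_Fcov_genericQuintic :
    restrictAxis 0 (Fcov genericQuintic) = restrictAxis 0 (5 * genericQuintic) *
      (Polynomial.C (125 * X 0 ^ 3 * X 4 - 50 * X 0 ^ 2 * X 1 * X 3
          + 15 * X 0 * X 1 ^ 2 * X 2 - 3 * X 1 ^ 4) * Polynomial.X ^ 12) := by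
  rw [restrictAxis_Fcov, map_mul (restrictAxis 0), restrictAxis_zero_genericQuintic,
    pderiv_zero_genericQuintic, pderiv_one_genericQuintic]
  simp only [restrictAxis, map_add, map_mul, map_pow, map_sub, map_ofNat, aeval_X, algHom_C,
    Polynomial.algebraMap_eq, Pi.single_eq_same, ne_eq, one_ne_zero,
    not_false_eq_true, Pi.single_eq_of_ne, Matrix.cons_val_zero, Matrix.cons_val_one,
    Matrix.cons_val_fin_one]
  ring

lemma restrictAxis_one_Fcov_genericQuintic :
    restrictAxis 1 (Fcov genericQuintic) = restrictAxis 1 (5 * genericQuintic) *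
      (Polynomial.C (125 * X 1 * X 5 ^ 3 - 50 * X 2 * X 4 * X 5 ^ 2
          + 15 * X 3 * X 4 ^ 2 * X 5 - 3 * X 4 ^ 4) * Polynomial.X ^ 12) := by
  rw [restrictAxis_Fcov, map_mul (restrictAxis 1), restrictAxis_one_genericQuintic,
    pderiv_zero_genericQuintic, pderiv_one_genericQuintic]
  simp only [restrictAxis, map_add, map_mul, map_pow, map_sub, map_ofNat, aeval_X, algHom_C,
    Polynomial.algebraMap_eq, Pi.single_eq_same, ne_eq, zero_ne_one,
    not_false_eq_true, Pi.single_eq_of_ne, Matrix.cons_val_zero, Matrix.cons_val_one,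
    Matrix.cons_val_fin_one]
  ring

/-- For the generic binary quintic
`f = a₀x⁵ + a₁x⁴z + a₂x³z² + a₃x²z³ + a₄xz⁴ + a₅z⁵` over `R = ℚ[a₀,…,a₅]`, the covariant
`G_f = F_f/(5·f)` has `x¹²`-coefficient `125a₀³a₄ - 50a₀²a₁a₃ + 15a₀a₁²a₂ - 3a₁⁴` and
`z¹²`-coefficient `125a₁a₅³ - 50a₂a₄a₅² + 15a₃a₄²a₅ - 3a₄⁴`. -/
theorem stmt17
    (f : MvPolynomial (Fin 2) (MvPolynomial (Fin 6) ℚ))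
    (hf : f = ∑ i : Fin 6, C (X i) * X 0 ^ (5 - (i : ℕ)) * X 1 ^ (i : ℕ))
    (G : MvPolynomial (Fin 2) (MvPolynomial (Fin 6) ℚ))
    (hG : Fcov f = (5 : MvPolynomial (Fin 2) (MvPolynomial (Fin 6) ℚ)) * f * G) :
    G.coeff (Finsupp.single 0 12)
        = 125 * X 0 ^ 3 * X 4 - 50 * X 0 ^ 2 * X 1 * X 3
          + 15 * X 0 * X 1 ^ 2 * X 2 - 3 * X 1 ^ 4 ∧
    G.coeff (Finsupp.single 1 12)
        = 125 * X 1 * X 5 ^ 3 - 50 * X 2 * X 4 * X 5 ^ 2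
          + 15 * X 3 * X 4 ^ 2 * X 5 - 3 * X 4 ^ 4 := by
  obtain rfl : f = genericQuintic := hf
  exact ⟨coeff_single_eq_of_restrictAxis_eq hG
      (restrictAxis_five_mul_genericQuintic_ne_zero 0) restrictAxis_zero_Fcov_genericQuintic,
    coeff_single_eq_of_restrictAxis_eq hG
      (restrictAxis_five_mul_genericQuintic_ne_zero 1) restrictAxis_one_Fcov_genericQuintic⟩
end
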